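/- arXiv:1912.03134 — 4 statements merged into one kernel-verified Lean document; each statement's English description precedes it below -/
import Mathlib

section
/- Let M be a smooth closed curve embedded in ℝ² with injectivity radius τ and let 0 < ε < τ. Then for each x ∈ M, the open ball B(x, ε) intersects the boundary of the ε-tubular neighborhood Mᵉ of M in exactly the two points x + ε·n(x) and x − ε·n(x), where n(x) is a unit normal to M at x. -/
noncomputable section
open Metric Set

abbrev E2 := EuclideanSpace ℝ (Fin 2)

/-- A smooth closed curve in the plane: a periodic, smooth, regular
parametrization, injective on a fundamental domain. -/
structure SmoothClosedCurve where
  γ : ℝ → E2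
  periodic : Function.Periodic γ 1
  smooth : ContDiff ℝ (⊤ : ℕ∞) γ
  regular : ∀ t : ℝ, deriv γ t ≠ 0
  inj : ∀ s ∈ Set.Ico (0:ℝ) 1, ∀ t ∈ Set.Ico (0:ℝ) 1, γ s = γ t → s = t

/-- `n` is a continuous unit normal field along the curve `c`. -/
def IsUnitNormalField (c : SmoothClosedCurve) (n : E2 → E2) : Prop :=
  ContinuousOn n (Set.range c.γ) ∧
    ∀ t : ℝ, ‖n (c.γ t)‖ = 1 ∧ (inner ℝ (deriv c.γ t) (n (c.γ t)) : ℝ) = 0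

/-- The injectivity radius of `M`: the supremum of radii `r` such that the
normal exponential map `(x, s) ↦ x + s • n x` is injective on the radius-`r`
normal disk bundle. -/
def injRadius (M : Set E2) (n : E2 → E2) : ℝ :=
  sSup {r : ℝ | 0 < r ∧
    Set.InjOn (fun p : E2 × ℝ => p.1 + p.2 • n p.1) {p | p.1 ∈ M ∧ |p.2| < r}}

open scoped RealInnerProductSpace

/-- In the plane, a vector orthogonal to a nonzero vector `w` is a multiple of
any unit vector orthogonal to `w`. -/
lemma planar_aux (v w u : E2) (hw : w ≠ 0) (hu : ‖u‖ = 1)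
    (h1 : ⟪v, w⟫ = 0) (h2 : ⟪w, u⟫ = 0) :
    v = ‖v‖ • u ∨ v = (-‖v‖) • u := by
  have hv1 : v 0 * w 0 + v 1 * w 1 = 0 := by
    have h := h1; simp [PiLp.inner_apply, Fin.sum_univ_two] at h; linear_combination h
  have hw1 : w 0 * u 0 + w 1 * u 1 = 0 := by
    have h := h2; simp [PiLp.inner_apply, Fin.sum_univ_two] at h; linear_combination h
  have hu2 : u 0 * u 0 + u 1 * u 1 = 1 := by
    have := real_inner_self_eq_norm_sq u
    rw [hu] at this
    simp only [PiLp.inner_apply, Fin.sum_univ_two, RCLike.inner_apply, conj_trivial] at this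
    linear_combination this
  have hwc : w 0 ≠ 0 ∨ w 1 ≠ 0 := by
    by_contra h
    push_neg at h
    exact hw (by ext i; fin_cases i <;> simp [h.1, h.2])
  have hD : v 0 * u 1 - v 1 * u 0 = 0 := by
    rcases hwc with h | h
    · have h0 : (v 0 * u 1 - v 1 * u 0) * w 0 = 0 := by
        linear_combination u 1 * hv1 - v 1 * hw1
      exact (mul_eq_zero.1 h0).resolve_right h
    · have h0 : (v 0 * u 1 - v 1 * u 0) * w 1 = 0 := by
        linear_combination -u 0 * hv1 + v 0 * hw1
      exact (mul_eq_zero.1 h0).resolve_right h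
  set cc : ℝ := v 0 * u 0 + v 1 * u 1 with hcc
  have hvc : v = cc • u := by
    ext i
    fin_cases i
    · show v 0 = cc * u 0
      rw [hcc]; linear_combination u 1 * hD - v 0 * hu2
    · show v 1 = cc * u 1
      rw [hcc]; linear_combination -u 0 * hD - v 1 * hu2
  have hnv : ‖v‖ = |cc| := by
    rw [hvc, norm_smul, hu, Real.norm_eq_abs, mul_one]
  rcases le_or_gt 0 cc with h | h
  · left; rw [hnv, abs_of_nonneg h]; exact hvc
  · right; rw [hnv, abs_of_neg h, neg_neg]; exact hvc

/-- First variation: a closest point on the curve to `y` sees `y` in a normal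
direction. -/
lemma nearest_perp (c : SmoothClosedCurve) (n : E2 → E2)
    (hn : IsUnitNormalField c n) (y : E2) (t₀ : ℝ)
    (hmin : ∀ t, dist y (c.γ t₀) ≤ dist y (c.γ t)) :
    y = c.γ t₀ + dist y (c.γ t₀) • n (c.γ t₀) ∨
      y = c.γ t₀ + (-dist y (c.γ t₀)) • n (c.γ t₀) := by
  have hder : HasDerivAt c.γ (deriv c.γ t₀) t₀ :=
    ((c.smooth.differentiable (by simp)) t₀).hasDerivAt
  have hgd : HasDerivAt (fun t => y - c.γ t) (-deriv c.γ t₀) t₀ := hder.const_sub y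
  have hf : HasDerivAt (fun t => ⟪y - c.γ t, y - c.γ t⟫)
      (⟪y - c.γ t₀, -deriv c.γ t₀⟫ + ⟪-deriv c.γ t₀, y - c.γ t₀⟫) t₀ :=
    hgd.inner ℝ hgd
  have hlm : IsLocalMin (fun t => ⟪y - c.γ t, y - c.γ t⟫) t₀ := by
    apply Filter.Eventually.of_forall
    intro t
    simp only [real_inner_self_eq_norm_sq, ← dist_eq_norm]
    exact pow_le_pow_left₀ dist_nonneg (hmin t) 2
  have h0 := hlm.deriv_eq_zero
  rw [hf.deriv] at h0
  have hperp : ⟪y - c.γ t₀, deriv c.γ t₀⟫ = 0 := by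
    rw [inner_neg_right, inner_neg_left, real_inner_comm] at h0
    rw [real_inner_comm]
    linarith
  obtain ⟨hu, hwu⟩ := hn.2 t₀
  have := planar_aux (y - c.γ t₀) (deriv c.γ t₀) (n (c.γ t₀)) (c.regular t₀) hu hperp hwu
  rw [← dist_eq_norm] at this
  rcases this with h | h
  · left; rw [← h]; abel
  · right; rw [← h]; abel

lemma curve_compact (c : SmoothClosedCurve) : IsCompact (Set.range c.γ) := by
  have h : c.γ '' Set.Icc 0 (0 + 1) = Set.range c.γ := c.periodic.image_Icc one_pos 0
  rw [← h]
  exact (isCompact_Icc).image c.smooth.continuous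

/-- Within the injectivity radius, points on normal segments are at distance
exactly `|s|` from `M`. -/
lemma tube_infDist (c : SmoothClosedCurve) (n : E2 → E2)
    (hn : IsUnitNormalField c n) (M : Set E2) (hM : M = Set.range c.γ)
    (x : E2) (hx : x ∈ M) (s : ℝ) (hs : |s| < injRadius M n) :
    infDist (x + s • n x) M = |s| := by
  obtain ⟨t, rfl⟩ : ∃ t, c.γ t = x := by rw [hM] at hx; exact hx
  set p := c.γ t + s • n (c.γ t) with hp
  have hnx : ‖n (c.γ t)‖ = 1 := (hn.2 t).1
  have hdpx : dist p (c.γ t) = |s| := by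
    rw [hp, dist_eq_norm, add_sub_cancel_left, norm_smul, hnx, mul_one, Real.norm_eq_abs]
  have hle : infDist p M ≤ |s| := hdpx ▸ infDist_le_dist_of_mem hx
  refine le_antisymm hle (not_lt.1 fun hlt => ?_)
  -- there is a closest point `γ t₁` with distance `d < |s|`
  have hMc : IsCompact M := hM ▸ curve_compact c
  have hMne : M.Nonempty := ⟨c.γ t, hx⟩
  obtain ⟨z, hzM, hzd⟩ := hMc.exists_infDist_eq_dist hMne p
  obtain ⟨t₁, rfl⟩ : ∃ t₁, c.γ t₁ = z := by rw [hM] at hzM; exact hzM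
  have hmin : ∀ t', dist p (c.γ t₁) ≤ dist p (c.γ t') := by
    intro t'
    rw [← hzd]
    exact infDist_le_dist_of_mem (hM ▸ mem_range_self t')
  have hdlt : dist p (c.γ t₁) < |s| := by rw [← hzd]; exact hlt
  have hdnn : 0 ≤ dist p (c.γ t₁) := dist_nonneg
  -- get a radius r ∈ S with |s| < r
  set S := {r : ℝ | 0 < r ∧
    Set.InjOn (fun q : E2 × ℝ => q.1 + q.2 • n q.1) {q | q.1 ∈ M ∧ |q.2| < r}} with hS
  have hSsup : injRadius M n = sSup S := rfl
  have hSne : S.Nonempty := by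
    by_contra h
    rw [Set.not_nonempty_iff_eq_empty] at h
    rw [hSsup, h, Real.sSup_empty] at hs
    exact absurd hs (not_lt.2 (abs_nonneg s))
  obtain ⟨r, hrS, hsr⟩ := exists_lt_of_lt_csSup hSne (hSsup ▸ hs)
  have hmem1 : ((c.γ t, s) : E2 × ℝ) ∈ {q : E2 × ℝ | q.1 ∈ M ∧ |q.2| < r} := ⟨hx, hsr⟩
  have key : ∀ d' : ℝ, |d'| < |s| → p = c.γ t₁ + d' • n (c.γ t₁) → False := by
    intro d' hd' heq
    have hmem2 : ((c.γ t₁, d') : E2 × ℝ) ∈ {q : E2 × ℝ | q.1 ∈ M ∧ |q.2| < r} :=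
      ⟨hzM, hd'.trans hsr⟩
    have himg : (fun q : E2 × ℝ => q.1 + q.2 • n q.1) (c.γ t, s)
        = (fun q : E2 × ℝ => q.1 + q.2 • n q.1) (c.γ t₁, d') := by
      simpa using heq.symm ▸ hp.symm
    have := hrS.2 hmem1 hmem2 himg
    have hs_eq : s = d' := (Prod.ext_iff.1 this).2
    rw [hs_eq] at hd'
    exact lt_irrefl _ hd'
  rcases nearest_perp c n hn p t₁ hmin with h | h
  · exact key _ (by rw [abs_of_nonneg hdnn]; exact hdlt) h
  · exact key _ (by rw [abs_neg, abs_of_nonneg hdnn]; exact hdlt) h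

/-- for `0 < ε < τ` and `x ∈ M`, the ball of radius `ε` around `x`
meets the boundary of the `ε`-tubular neighborhood of `M` in exactly the two
points `x ± ε • n x`. -/
theorem stmt3 (c : SmoothClosedCurve) (n : E2 → E2) (hn : IsUnitNormalField c n)
    (M : Set E2) (hM : M = Set.range c.γ)
    (τ ε : ℝ) (hτ : τ = injRadius M n) (hε0 : 0 < ε) (hετ : ε < τ) :
    ∀ x ∈ M,
      Metric.closedBall x ε ∩ frontier {y : E2 | Metric.infDist y M < ε} =
        {x + ε • n x, x - ε • n x} := by
  intro x hx
  obtain ⟨t, htx⟩ : ∃ t, c.γ t = x := by rw [hM] at hx; exact hx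
  have hnx : ‖n x‖ = 1 := htx ▸ (hn.2 t).1
  set U := {y : E2 | infDist y M < ε} with hU
  have hUopen : IsOpen U := isOpen_lt (continuous_infDist_pt M) continuous_const
  have key : ∀ s : ℝ, |s| = ε → x + s • n x ∈ Metric.closedBall x ε ∩ frontier U := by
    intro s hsε
    have hsτ : |s| < injRadius M n := by rw [hsε, ← hτ]; exact hετ
    have htube : infDist (x + s • n x) M = ε := by
      rw [tube_infDist c n hn M hM x hx s hsτ, hsε]
    have hdist : dist (x + s • n x) x = ε := by
      rw [dist_eq_norm, add_sub_cancel_left, norm_smul, hnx, mul_one,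
        Real.norm_eq_abs, hsε]
    refine ⟨mem_closedBall.2 hdist.le, ?_⟩
    rw [hUopen.frontier_eq]
    constructor
    · -- in the closure: approach along the normal segment
      have hcont : Continuous (fun r : ℝ => x + (r * s) • n x) := by
        exact continuous_const.add ((continuous_id.mul continuous_const).smul
          continuous_const)
      have htend : Filter.Tendsto (fun r : ℝ => x + (r * s) • n x)
          (nhdsWithin 1 (Set.Iio 1)) (nhds (x + s • n x)) := by
        have h := (hcont.tendsto 1).mono_left (nhdsWithin_le_nhds (s := Set.Iio 1))
        simpa using h
      refine mem_closure_of_tendsto htend ?_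
      filter_upwards [Ioo_mem_nhdsLT_of_mem (Set.mem_Ioc.2 ⟨zero_lt_one, le_refl 1⟩)]
        with r hr
      show infDist (x + (r * s) • n x) M < ε
      have h1 : infDist (x + (r * s) • n x) M ≤ dist (x + (r * s) • n x) x :=
        infDist_le_dist_of_mem hx
      have h2 : dist (x + (r * s) • n x) x = r * ε := by
        rw [dist_eq_norm, add_sub_cancel_left, norm_smul, hnx, mul_one,
          Real.norm_eq_abs, abs_mul, abs_of_pos hr.1, hsε]
      have h3 : r * ε < ε := by nlinarith [hr.1, hr.2, hε0]
      calc infDist (x + (r * s) • n x) M ≤ r * ε := h2 ▸ h1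
        _ < ε := h3
    · -- not in `U`
      intro hmem
      rw [hU] at hmem
      exact absurd (htube ▸ hmem) (lt_irrefl ε)
  ext y
  constructor
  · rintro ⟨hyb, hyf⟩
    rw [hUopen.frontier_eq] at hyf
    obtain ⟨hycl, hyU⟩ := hyf
    have h1 : infDist y M ≤ ε := by
      have hsub : closure U ⊆ {z : E2 | infDist z M ≤ ε} :=
        closure_minimal (fun z hz => le_of_lt (show infDist z M < ε from hz))
          (isClosed_le (continuous_infDist_pt M) continuous_const)
      exact hsub hycl
    have h2 : ε ≤ infDist y M := not_lt.1 hyU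
    have h3 : infDist y M = ε := le_antisymm h1 h2
    have hdyx : dist y x = ε := by
      refine le_antisymm (mem_closedBall.1 hyb) ?_
      calc ε = infDist y M := h3.symm
        _ ≤ dist y x := infDist_le_dist_of_mem hx
    have hmin : ∀ t', dist y (c.γ t) ≤ dist y (c.γ t') := by
      intro t'
      rw [htx, hdyx, ← h3]
      exact infDist_le_dist_of_mem (hM ▸ mem_range_self t')
    have := nearest_perp c n hn y t hmin
    rw [htx, hdyx] at this
    rcases this with h | h
    · exact Set.mem_insert_iff.2 (Or.inl h)
    · refine Set.mem_insert_iff.2 (Or.inr (Set.mem_singleton_iff.2 ?_))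
      rw [h, neg_smul, sub_eq_add_neg]
  · intro hy
    rcases Set.mem_insert_iff.1 hy with h | h
    · rw [h]
      exact key ε (abs_of_pos hε0)
    · rw [Set.mem_singleton_iff.1 h]
      have := key (-ε) (by rw [abs_neg]; exact abs_of_pos hε0)
      rwa [neg_smul, ← sub_eq_add_neg] at this
end
end

section
/- Let G be an embedded metric graph with straight-line edges and shortest edge length l. For any two points x, y ∈ G with geodesic distance d_G(x, y) < l, the shortest path in G between x and y is unique and contains at most one vertex of G in its interior. -/
noncomputable section
open scoped ENNReal
open Metric Set

abbrev E (n : ℕ) := EuclideanSpace ℝ (Fin n)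

/-- The geometric realization of a straight-line graph: the union of its
edge segments. -/
def graphSet {n : ℕ} (Ed : Finset (E n × E n)) : Set (E n) :=
  ⋃ e ∈ Ed, segment ℝ e.1 e.2

/-- The graph with vertex set `V` and straight-line edges `Ed` is embedded:
edges are nondegenerate segments between vertices, two distinct edges meet
only in common endpoints, and no vertex lies in the interior of an edge. -/
def IsEmbeddedGraph {n : ℕ} (V : Finset (E n)) (Ed : Finset (E n × E n)) : Prop :=
  (∀ e ∈ Ed, e.1 ∈ V ∧ e.2 ∈ V ∧ e.1 ≠ e.2) ∧
  (∀ e ∈ Ed, ∀ e' ∈ Ed, e ≠ e' →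
      segment ℝ e.1 e.2 ∩ segment ℝ e'.1 e'.2 ⊆ ({e.1, e.2} : Set (E n)) ∩ {e'.1, e'.2}) ∧
  (∀ v ∈ V, ∀ e ∈ Ed, v ∈ segment ℝ e.1 e.2 → v = e.1 ∨ v = e.2)

/-- The intrinsic (geodesic) distance in a set `G`: the infimum of lengths
(total variations) of continuous paths in `G` from `x` to `y`. -/
def dG {n : ℕ} (G : Set (E n)) (x y : E n) : ℝ≥0∞ :=
  ⨅ (γ : ℝ → E n) (_ : ContinuousOn γ (Set.Icc 0 1))
    (_ : Set.MapsTo γ (Set.Icc 0 1) G) (_ : γ 0 = x) (_ : γ 1 = y),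
    eVariationOn γ (Set.Icc 0 1)

/-- `l` is the length of the shortest edge of `Ed`. -/
def IsMinEdgeLength {n : ℕ} (Ed : Finset (E n × E n)) (l : ℝ) : Prop :=
  (∀ e ∈ Ed, l ≤ dist e.1 e.2) ∧ ∃ e ∈ Ed, dist e.1 e.2 = l

/-- The geodesic feature size of `G` (with shortest edge length `l`): the
supremum of all `r > 0` such that `‖x - y‖ < 2r` implies `d_G(x,y) < l`. -/
def gfs {n : ℕ} (G : Set (E n)) (l : ℝ) : ℝ :=
  sSup {r : ℝ | 0 < r ∧ ∀ x ∈ G, ∀ y ∈ G,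
    dist x y < 2 * r → dG G x y < ENNReal.ofReal l}

namespace Stmt5Aux

variable {n : ℕ}

/-- Admissible path. -/
def Adm (G : Set (E n)) (x y : E n) (γ : ℝ → E n) : Prop :=
  ContinuousOn γ (Set.Icc 0 1) ∧ Set.MapsTo γ (Set.Icc 0 1) G ∧ γ 0 = x ∧ γ 1 = y

lemma dG_le {G : Set (E n)} {x y : E n} {γ : ℝ → E n} (h : Adm G x y γ) :
    dG G x y ≤ eVariationOn γ (Set.Icc 0 1) := by
  obtain ⟨h1, h2, h3, h4⟩ := h
  refine le_trans (iInf_le _ γ) ?_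
  rw [iInf_pos h1, iInf_pos h2, iInf_pos h3, iInf_pos h4]

lemma le_dG {G : Set (E n)} {x y : E n} {c : ℝ≥0∞}
    (h : ∀ γ, Adm G x y γ → c ≤ eVariationOn γ (Set.Icc 0 1)) : c ≤ dG G x y :=
  le_iInf fun γ => le_iInf fun h1 => le_iInf fun h2 => le_iInf fun h3 => le_iInf fun h4 =>
    h γ ⟨h1, h2, h3, h4⟩

lemma exists_adm_lt {G : Set (E n)} {x y : E n} {c : ℝ≥0∞} (h : dG G x y < c) :
    ∃ γ, Adm G x y γ ∧ eVariationOn γ (Set.Icc 0 1) < c := by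
  by_contra hc
  push_neg at hc
  exact absurd (le_dG fun γ hγ => hc γ hγ) (not_le.2 h)

/-- The straight path. -/
def aff (p q : E n) : ℝ → E n := fun t => p + t • (q - p)

lemma aff_cont (p q : E n) : Continuous (aff p q) := by
  unfold aff; fun_prop

@[simp] lemma aff_zero (p q : E n) : aff p q 0 = p := by simp [aff]

@[simp] lemma aff_one (p q : E n) : aff p q 1 = q := by simp [aff]

lemma aff_image (p q : E n) : aff p q '' Set.Icc 0 1 = segment ℝ p q :=
  (segment_eq_image' ℝ p q).symm

lemma aff_mem {p q : E n} {t : ℝ} (ht : t ∈ Set.Icc (0:ℝ) 1) : aff p q t ∈ segment ℝ p q := by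
  rw [← aff_image]; exact ⟨t, ht, rfl⟩

lemma aff_lipschitz (p q : E n) : LipschitzWith ‖q - p‖₊ (aff p q) := by
  apply LipschitzWith.of_dist_le_mul
  intro s t
  have : aff p q s - aff p q t = (s - t) • (q - p) := by simp [aff]; module
  rw [dist_eq_norm, this, norm_smul, Real.dist_eq, Real.norm_eq_abs, mul_comm, ← coe_nnnorm]

lemma eVariationOn_id_Icc : eVariationOn (id : ℝ → ℝ) (Set.Icc 0 1) ≤ 1 := by
  have h := (monotoneOn_id (s := Set.Icc (0:ℝ) 1)).eVariationOn_le
    (Set.left_mem_Icc.2 zero_le_one) (Set.right_mem_Icc.2 zero_le_one)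
  simpa using h

lemma aff_evar (p q : E n) : eVariationOn (aff p q) (Set.Icc 0 1) = edist p q := by
  apply le_antisymm
  · have hl : LipschitzOnWith ‖q - p‖₊ (aff p q) (Set.univ) := (aff_lipschitz p q).lipschitzOnWith
    have := hl.comp_eVariationOn_le (g := (id : ℝ → ℝ)) (s := Set.Icc 0 1) (Set.mapsTo_univ _ _)
    refine le_trans (b := (‖q - p‖₊ : ℝ≥0∞) * eVariationOn (id : ℝ → ℝ) (Set.Icc 0 1)) (by simpa [Function.comp] using this) ?_
    calc (‖q - p‖₊ : ℝ≥0∞) * eVariationOn (id : ℝ → ℝ) (Set.Icc 0 1)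
        ≤ (‖q - p‖₊ : ℝ≥0∞) * 1 := by gcongr; exact eVariationOn_id_Icc
      _ = edist p q := by rw [mul_one, edist_comm, edist_nndist, nndist_eq_nnnorm]
  · have := eVariationOn.edist_le (aff p q) (Set.left_mem_Icc.2 zero_le_one)
      (Set.right_mem_Icc.2 zero_le_one)
    simpa using this

lemma evar_split {γ : ℝ → E n} {a b c : ℝ} (hab : a ≤ b) (hbc : b ≤ c) :
    eVariationOn γ (Set.Icc a b) + eVariationOn γ (Set.Icc b c) = eVariationOn γ (Set.Icc a c) := by
  have := eVariationOn.Icc_add_Icc γ (s := Set.univ) hab hbc (Set.mem_univ b)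
  simpa using this



/-- A path whose variation equals the distance of its endpoints has the segment
between them as image. -/
lemma image_eq_segment {γ : ℝ → E n} {s t : ℝ} (hst : s ≤ t)
    (hc : ContinuousOn γ (Set.Icc s t))
    (hvar : eVariationOn γ (Set.Icc s t) = edist (γ s) (γ t)) :
    γ '' Set.Icc s t = segment ℝ (γ s) (γ t) := by
  have hsm : s ∈ Set.Icc s t := ⟨le_rfl, hst⟩
  have htm : t ∈ Set.Icc s t := ⟨hst, le_rfl⟩
  have hsub : γ '' Set.Icc s t ⊆ segment ℝ (γ s) (γ t) := by
    rintro _ ⟨u, hu, rfl⟩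
    have h1 : edist (γ s) (γ u) ≤ eVariationOn γ (Set.Icc s u) :=
      eVariationOn.edist_le γ ⟨le_rfl, hu.1⟩ ⟨hu.1, le_rfl⟩
    have h2 : edist (γ u) (γ t) ≤ eVariationOn γ (Set.Icc u t) :=
      eVariationOn.edist_le γ ⟨le_rfl, hu.2⟩ ⟨hu.2, le_rfl⟩
    have hsplit : eVariationOn γ (Set.Icc s u) + eVariationOn γ (Set.Icc u t)
        = eVariationOn γ (Set.Icc s t) := by
      have := eVariationOn.Icc_add_Icc γ (s := Set.univ) hu.1 hu.2 (Set.mem_univ u)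
      simpa using this
    have hle : edist (γ s) (γ u) + edist (γ u) (γ t) ≤ edist (γ s) (γ t) := by
      rw [← hvar, ← hsplit]; exact add_le_add h1 h2
    have hle' : dist (γ s) (γ u) + dist (γ u) (γ t) ≤ dist (γ s) (γ t) := by
      have := hle
      rw [edist_dist, edist_dist, edist_dist, ← ENNReal.ofReal_add dist_nonneg dist_nonneg] at this
      exact (ENNReal.ofReal_le_ofReal_iff dist_nonneg).1 this
    have heq : dist (γ s) (γ u) + dist (γ u) (γ t) = dist (γ s) (γ t) :=
      le_antisymm hle' (dist_triangle _ _ _)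
    exact mem_segment_iff_wbtw.2 (dist_add_dist_eq_iff.1 heq)
  refine hsub.antisymm ?_
  by_cases hpq : γ s = γ t
  · rw [← hpq, segment_same]
    exact Set.singleton_subset_iff.2 ⟨s, hsm, rfl⟩
  · intro z hz
    set p := γ s with hp
    set q := γ t with hq
    rw [segment_eq_image'] at hz
    obtain ⟨c, hc01, rfl⟩ := hz
    set h : ℝ → ℝ := fun τ => inner (𝕜 := ℝ) (γ τ - p) (q - p) with hh
    have hch : ContinuousOn h (Set.Icc s t) :=
      ContinuousOn.inner (hc.sub continuousOn_const) continuousOn_const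
    have h0 : h s = 0 := by simp [hh, hp]
    have h1 : h t = ‖q - p‖ ^ 2 := by
      rw [hh]
      simp only [← hq]
      exact real_inner_self_eq_norm_sq _
    have hnq : (0:ℝ) < ‖q - p‖ ^ 2 := by
      have h' : q - p ≠ 0 := sub_ne_zero.2 (fun hh' => hpq hh'.symm)
      exact pow_pos (norm_pos_iff.2 h') 2
    have hmem : c * ‖q - p‖ ^ 2 ∈ Set.Icc (h s) (h t) := by
      rw [h0, h1]
      constructor
      · exact mul_nonneg hc01.1 hnq.le
      · nlinarith [hc01.2, hnq]
    obtain ⟨τ, hτ, hhτ⟩ := intermediate_value_Icc hst hch hmem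
    have hτseg : γ τ ∈ segment ℝ p q := hsub ⟨τ, hτ, rfl⟩
    rw [segment_eq_image'] at hτseg
    obtain ⟨c', hc', hgc'⟩ := hτseg
    have hhτ' : h τ = c' * ‖q - p‖ ^ 2 := by
      rw [hh]
      simp only [← hgc', add_sub_cancel_left, real_inner_smul_left, real_inner_self_eq_norm_sq]
    have hcc : c' = c := by
      rw [hhτ'] at hhτ
      have := mul_right_cancel₀ (ne_of_gt hnq) hhτ
      exact this
    exact ⟨τ, hτ, by rw [← hgc', hcc]⟩

/-- If an endpoint of a segment lies on a subsegment, it is an endpoint of it. -/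
lemma endpoint_mem_segment {a b x y : E n} (hab : a ≠ b)
    (hx : x ∈ segment ℝ a b) (hy : y ∈ segment ℝ a b) (ha : a ∈ segment ℝ x y) :
    a = x ∨ a = y := by
  rw [segment_eq_image'] at hx hy
  obtain ⟨s, hs, rfl⟩ := hx
  obtain ⟨t, ht, rfl⟩ := hy
  rw [segment_eq_image'] at ha
  obtain ⟨c, hc, hac⟩ := ha
  have hzero : (s + c * (t - s)) • (b - a) = 0 := by
    have hac' : a + s • (b - a) + c • ((a + t • (b - a)) - (a + s • (b - a))) = a := hac
    have h2 : a + s • (b - a) + c • ((a + t • (b - a)) - (a + s • (b - a)))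
        = a + (s + c * (t - s)) • (b - a) := by module
    rw [h2] at hac'
    exact add_eq_left.1 hac'
  have hba : b - a ≠ 0 := sub_ne_zero.2 (Ne.symm hab)
  have hco : s + c * (t - s) = 0 := by
    rcases smul_eq_zero.1 hzero with h | h
    · exact h
    · exact absurd h hba
  have hs0 : s = 0 ∨ t = 0 := by
    rcases eq_or_lt_of_le hs.1 with h | h
    · exact Or.inl h.symm
    · right
      have h1 : (1 - c) * s + c * t = 0 := by linear_combination hco
      have ha : 0 ≤ (1 - c) * s := mul_nonneg (by linarith [hc.2]) hs.1
      have hb : 0 ≤ c * t := mul_nonneg hc.1 ht.1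
      have hcs : (1 - c) * s = 0 := by linarith
      have hct : c * t = 0 := by linarith
      rcases mul_eq_zero.1 hcs with h' | h'
      · have hc1 : c = 1 := by linarith
        rw [hc1, one_mul] at hct
        exact hct
      · exact absurd h' (ne_of_gt h)
  rcases hs0 with h | h
  · left; simp [← h]  -- a = a + 0 • (b - a)
  · right; simp [← h]



lemma isClosed_seg (a b : E n) : IsClosed (segment ℝ a b) := by
  rw [segment_eq_image']
  exact (isCompact_Icc.image (by fun_prop)).isClosed

lemma isClosed_biUnion_seg (s : Finset (E n × E n)) :
    IsClosed (⋃ e ∈ s, segment ℝ e.1 e.2) :=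
  Set.Finite.isClosed_biUnion (s.finite_toSet) (fun e _ => isClosed_seg e.1 e.2)

lemma seg_subset_graph {Ed : Finset (E n × E n)} {e : E n × E n} (he : e ∈ Ed) :
    segment ℝ e.1 e.2 ⊆ graphSet Ed := by
  intro z hz
  exact Set.mem_biUnion he hz

lemma mem_graphSet {Ed : Finset (E n × E n)} {z : E n} :
    z ∈ graphSet Ed ↔ ∃ e ∈ Ed, z ∈ segment ℝ e.1 e.2 := by
  simp [graphSet]

/-- If `p` lies only on edges from `S`, then near `p` the graph is contained in
the union of the edges of `S`. -/
lemma ball_inter_graph (Ed S : Finset (E n × E n)) (p : E n)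
    (hp : ∀ e ∈ Ed, p ∈ segment ℝ e.1 e.2 → e ∈ S) :
    ∃ ε > 0, ∀ z ∈ graphSet Ed, dist z p < ε → z ∈ ⋃ e ∈ S, segment ℝ e.1 e.2 := by
  classical
  set K := ⋃ e ∈ (Ed \ S : Finset (E n × E n)), segment ℝ e.1 e.2 with hK
  have hKc : IsClosed K := isClosed_biUnion_seg _
  have hpK : p ∉ K := by
    rw [hK]
    intro hmem
    rw [Set.mem_iUnion₂] at hmem
    obtain ⟨e, he, hpe⟩ := hmem
    rw [Finset.mem_sdiff] at he
    exact he.2 (hp e he.1 hpe)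
  have : Kᶜ ∈ nhds p := hKc.isOpen_compl.mem_nhds hpK
  obtain ⟨ε, hε, hball⟩ := Metric.mem_nhds_iff.1 this
  refine ⟨ε, hε, fun z hz hdz => ?_⟩
  have hzK : z ∉ K := hball (by rwa [Metric.mem_ball])
  rw [mem_graphSet] at hz
  obtain ⟨e, he, hze⟩ := hz
  by_cases heS : e ∈ S
  · exact Set.mem_biUnion heS hze
  · exact absurd (Set.mem_biUnion (Finset.mem_sdiff.2 ⟨he, heS⟩) hze) hzK

/-- Continuation lemma: following a path inside a closed set, either we stay in
it to the end, or we reach a point near which points of `G` leave the set. -/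
lemma reach {G : Set (E n)} {γ : ℝ → E n} {a b : ℝ} (hab : a ≤ b)
    (hc : ContinuousOn γ (Set.Icc a b)) (hm : Set.MapsTo γ (Set.Icc a b) G)
    {C : Set (E n)} (hC : IsClosed C) (ha : γ a ∈ C) :
    ∃ T ∈ Set.Icc a b, γ '' Set.Icc a T ⊆ C ∧
      (T = b ∨ ¬ ∃ ε > 0, ∀ z ∈ G, dist z (γ T) < ε → z ∈ C) := by
  set Q : Set ℝ := {τ | τ ∈ Set.Icc a b ∧ γ '' Set.Icc a τ ⊆ C} with hQ
  have haQ : a ∈ Q := by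
    refine ⟨⟨le_rfl, hab⟩, ?_⟩
    rw [Set.Icc_self, Set.image_singleton]
    exact Set.singleton_subset_iff.2 ha
  have hQbdd : BddAbove Q := ⟨b, fun τ hτ => hτ.1.2⟩
  set T := sSup Q with hT
  have haT : a ≤ T := le_csSup hQbdd haQ
  have hTb : T ≤ b := csSup_le ⟨a, haQ⟩ (fun τ hτ => hτ.1.2)
  have hTmem : T ∈ Set.Icc a b := ⟨haT, hTb⟩
  -- the set of times where γ is in C is closed
  have hD : IsClosed (Set.Icc a b ∩ γ ⁻¹' C) := hc.preimage_isClosed_of_isClosed isClosed_Icc hC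
  have himg : γ '' Set.Icc a T ⊆ C := by
    rintro _ ⟨σ, hσ, rfl⟩
    rcases eq_or_lt_of_le hσ.2 with h | h
    · -- σ = T : limit argument
      rcases eq_or_lt_of_le hσ.1 with h' | h'
      · rw [← h']; exact ha
      · have hsub : Set.Ico a σ ⊆ Set.Icc a b ∩ γ ⁻¹' C := by
          intro u hu
          have hu' : u < sSup Q := by rw [← hT, ← h]; exact hu.2
          obtain ⟨τ', hτ'Q, hτ'⟩ := exists_lt_of_lt_csSup ⟨a, haQ⟩ hu'
          refine ⟨⟨hu.1, le_trans (le_of_lt hu.2) (h ▸ hTb : σ ≤ b)⟩, ?_⟩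
          exact hτ'Q.2 ⟨u, ⟨hu.1, hτ'.le⟩, rfl⟩
        have hcl : σ ∈ closure (Set.Ico a σ) := by
          rw [closure_Ico (ne_of_lt h')]
          exact ⟨le_of_lt h', le_rfl⟩
        have : σ ∈ Set.Icc a b ∩ γ ⁻¹' C :=
          hD.closure_subset ((closure_mono hsub) hcl)
        exact this.2
    · obtain ⟨τ', hτ'Q, hττ'⟩ := exists_lt_of_lt_csSup ⟨a, haQ⟩ (hT ▸ h)
      exact hτ'Q.2 ⟨σ, ⟨hσ.1, hττ'.le⟩, rfl⟩
  refine ⟨T, hTmem, himg, ?_⟩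
  by_cases hTb' : T = b
  · exact Or.inl hTb'
  right
  rintro ⟨ε, hε, hball⟩
  have hTltb : T < b := lt_of_le_of_ne hTb hTb'
  -- continuity at T: find δ
  have hcT : ContinuousWithinAt γ (Set.Icc a b) T := hc T hTmem
  have : Metric.ball (γ T) ε ∈ nhds (γ T) := Metric.ball_mem_nhds _ hε
  obtain ⟨δ, hδ, hδball⟩ := Metric.mem_nhdsWithin_iff.1 (hcT this)
  set τ' := min b (T + δ / 2) with hτ'
  have hτ'T : T < τ' := lt_min hTltb (by linarith)
  have hτ'b : τ' ≤ b := min_le_left _ _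
  have hτ'Q : τ' ∈ Q := by
    refine ⟨⟨le_trans haT hτ'T.le, hτ'b⟩, ?_⟩
    rintro _ ⟨σ, hσ, rfl⟩
    rcases le_or_gt σ T with hσT | hσT
    · exact himg ⟨σ, ⟨hσ.1, hσT⟩, rfl⟩
    · have hσmem : σ ∈ Set.Icc a b := ⟨hσ.1, le_trans hσ.2 hτ'b⟩
      have hσball : σ ∈ Metric.ball T δ := by
        rw [Metric.mem_ball, Real.dist_eq, abs_of_pos (by linarith)]
        have : σ ≤ T + δ / 2 := le_trans hσ.2 (min_le_right _ _)
        linarith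
      have : γ σ ∈ Metric.ball (γ T) ε := hδball ⟨hσball, hσmem⟩
      exact hball (γ σ) (hm hσmem) (Metric.mem_ball.1 this)
  have : τ' ≤ T := le_csSup hQbdd hτ'Q
  exact absurd this (not_le.2 hτ'T)


section Graph

variable {V : Finset (E n)} {Ed : Finset (E n × E n)} {l : ℝ} {G : Set (E n)}

/-- Lemma A: a path starting at a vertex with variation `< l` stays on edges
incident to that vertex. -/
lemma star_lemma (hemb : IsEmbeddedGraph V Ed) (hl : ∀ e ∈ Ed, l ≤ dist e.1 e.2)
    (hG : G = graphSet Ed)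
    {γ : ℝ → E n} {a b : ℝ} {v : E n} (hab : a ≤ b)
    (hc : ContinuousOn γ (Set.Icc a b)) (hm : Set.MapsTo γ (Set.Icc a b) G)
    (hva : γ a = v) (hvV : v ∈ V)
    (hvar : eVariationOn γ (Set.Icc a b) < ENNReal.ofReal l) :
    ∀ τ ∈ Set.Icc a b, ∃ e ∈ Ed, (e.1 = v ∨ e.2 = v) ∧ γ τ ∈ segment ℝ e.1 e.2 := by
  classical
  set S : Finset (E n × E n) := Ed.filter (fun e => e.1 = v ∨ e.2 = v) with hS
  set C : Set (E n) := ⋃ e ∈ S, segment ℝ e.1 e.2 with hC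
  have hCc : IsClosed C := isClosed_biUnion_seg S
  have haC : γ a ∈ C := by
    have hmem : γ a ∈ G := hm ⟨le_rfl, hab⟩
    rw [hG, mem_graphSet] at hmem
    obtain ⟨e, he, hve⟩ := hmem
    rw [hva] at hve ⊢
    have h3 := hemb.2.2 v hvV e he hve
    exact Set.mem_biUnion (Finset.mem_filter.2 ⟨he, by tauto⟩) hve
  obtain ⟨T, hTmem, himg, hTalt⟩ := reach hab hc hm hCc haC
  have hTb : T = b := by
    rcases hTalt with h | h
    · exact h
    exfalso
    apply h
    have hpC : γ T ∈ C := himg ⟨T, ⟨hTmem.1, le_rfl⟩, rfl⟩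
    rw [hC, Set.mem_iUnion₂] at hpC
    obtain ⟨e, heS, hpe⟩ := hpC
    have heEd : e ∈ Ed := (Finset.mem_filter.1 heS).1
    have hinc : e.1 = v ∨ e.2 = v := (Finset.mem_filter.1 heS).2
    have hdist : dist v (γ T) < l := by
      have h1 : edist (γ a) (γ T) ≤ eVariationOn γ (Set.Icc a T) :=
        eVariationOn.edist_le γ ⟨le_rfl, hTmem.1⟩ ⟨hTmem.1, le_rfl⟩
      have h2 : eVariationOn γ (Set.Icc a T) ≤ eVariationOn γ (Set.Icc a b) :=
        eVariationOn.mono γ (Set.Icc_subset_Icc le_rfl hTmem.2)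
      have h4 := lt_of_le_of_lt (le_trans h1 h2) hvar
      rw [hva, edist_dist] at h4
      exact (ENNReal.ofReal_lt_ofReal_iff_of_nonneg dist_nonneg).1 h4
    by_cases hpv : γ T = v
    · -- neighborhood of the vertex v
      obtain ⟨ε, hε, hball⟩ := ball_inter_graph Ed S v (fun e' he' hve' =>
        Finset.mem_filter.2 ⟨he', by
          rcases hemb.2.2 v hvV e' he' hve' with h' | h'
          · exact Or.inl h'.symm
          · exact Or.inr h'.symm⟩)
      refine ⟨ε, hε, fun z hz hdz => ?_⟩
      rw [hC]
      exact hball z (hG ▸ hz) (by rwa [hpv] at hdz)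
    · -- γ T is an interior point of e
      have hp1 : γ T ≠ e.1 := by
        intro h'
        rcases hinc with h1 | h2
        · exact hpv (h'.trans h1)
        · rw [h', ← h2, dist_comm] at hdist
          exact absurd (hl e heEd) (not_le.2 hdist)
      have hp2 : γ T ≠ e.2 := by
        intro h'
        rcases hinc with h1 | h2
        · rw [h', ← h1] at hdist
          exact absurd (hl e heEd) (not_le.2 hdist)
        · exact hpv (h'.trans h2)
      obtain ⟨ε, hε, hball⟩ := ball_inter_graph Ed {e} (γ T) (by
        intro e' he' hpe'
        rw [Finset.mem_singleton]
        by_contra hne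
        have hmem := hemb.2.1 e' he' e heEd hne ⟨hpe', hpe⟩
        rcases hmem.2 with h' | h'
        · exact hp1 h'
        · exact hp2 h')
      refine ⟨ε, hε, fun z hz hdz => ?_⟩
      have hz' := hball z (hG ▸ hz) hdz
      rw [Set.mem_iUnion₂] at hz'
      obtain ⟨e', he', hz''⟩ := hz'
      rw [Finset.mem_singleton] at he'
      subst he'
      exact Set.mem_biUnion heS hz''
  intro τ hτ
  have : γ τ ∈ C := himg ⟨τ, ⟨hτ.1, hTb ▸ hτ.2⟩, rfl⟩
  rw [hC, Set.mem_iUnion₂] at this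
  obtain ⟨e, heS, hτe⟩ := this
  exact ⟨e, (Finset.mem_filter.1 heS).1, (Finset.mem_filter.1 heS).2, hτe⟩

/-- Lemma B: a path starting on an edge either stays on it or reaches one of
its endpoints (staying on the edge until then). -/
lemma exit_lemma (hemb : IsEmbeddedGraph V Ed) (hG : G = graphSet Ed)
    {γ : ℝ → E n} {a b : ℝ} {e : E n × E n} (he : e ∈ Ed) (hab : a ≤ b)
    (hc : ContinuousOn γ (Set.Icc a b)) (hm : Set.MapsTo γ (Set.Icc a b) G)
    (hae : γ a ∈ segment ℝ e.1 e.2) :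
    (γ '' Set.Icc a b ⊆ segment ℝ e.1 e.2) ∨
      ∃ T ∈ Set.Icc a b, (γ T = e.1 ∨ γ T = e.2) := by
  classical
  obtain ⟨T, hTmem, himg, halt⟩ := reach hab hc hm (isClosed_seg e.1 e.2) hae
  by_cases hp : γ T = e.1 ∨ γ T = e.2
  · exact Or.inr ⟨T, hTmem, hp⟩
  rcases halt with h | h
  · subst h
    exact Or.inl himg
  exfalso
  apply h
  push_neg at hp
  have hpe : γ T ∈ segment ℝ e.1 e.2 := himg ⟨T, ⟨hTmem.1, le_rfl⟩, rfl⟩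
  obtain ⟨ε, hε, hball⟩ := ball_inter_graph Ed {e} (γ T) (by
    intro e' he' hpe'
    rw [Finset.mem_singleton]
    by_contra hne
    have hmem := hemb.2.1 e' he' e he hne ⟨hpe', hpe⟩
    rcases hmem.2 with h' | h'
    · exact hp.1 h'
    · exact hp.2 h')
  refine ⟨ε, hε, fun z hz hdz => ?_⟩
  have hz' := hball z (hG ▸ hz) hdz
  rw [Set.mem_iUnion₂] at hz'
  obtain ⟨e', he', hz''⟩ := hz'
  rw [Finset.mem_singleton] at he'
  subst he'
  exact hz''

lemma adm_reverse {G : Set (E n)} {x y : E n} {γ : ℝ → E n} (h : Adm G x y γ) :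
    Adm G y x (γ ∘ (fun t => 1 - t)) ∧
      eVariationOn (γ ∘ (fun t => 1 - t)) (Set.Icc 0 1) = eVariationOn γ (Set.Icc 0 1) := by
  obtain ⟨h1, h2, h3, h4⟩ := h
  have himg : (fun t : ℝ => 1 - t) '' Set.Icc 0 1 = Set.Icc 0 1 := by
    rw [Set.image_const_sub_Icc]; norm_num
  have hmt : Set.MapsTo (fun t : ℝ => 1 - t) (Set.Icc 0 1) (Set.Icc 0 1) := by
    intro t ht
    simp only [Set.mem_Icc] at ht ⊢
    constructor <;> linarith
  have hanti : AntitoneOn (fun t : ℝ => 1 - t) (Set.Icc 0 1) := by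
    intro u _ w _ huw
    simp only
    linarith
  constructor
  · refine ⟨h1.comp (by fun_prop) hmt, h2.comp hmt, ?_, ?_⟩
    · simp only [Function.comp_apply, sub_zero]; exact h4
    · simp only [Function.comp_apply, sub_self]; exact h3
  · rw [eVariationOn.comp_eq_of_antitoneOn γ _ hanti, himg]

lemma unique_edge {V : Finset (E n)} {Ed : Finset (E n × E n)} {G : Set (E n)}
    (hemb : IsEmbeddedGraph V Ed) (hG : G = graphSet Ed) {p : E n}
    (hpV : p ∉ V) (hp : p ∈ G) :
    ∃ e ∈ Ed, p ∈ segment ℝ e.1 e.2 ∧ ∀ e' ∈ Ed, p ∈ segment ℝ e'.1 e'.2 → e' = e := by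
  rw [hG, mem_graphSet] at hp
  obtain ⟨e, he, hpe⟩ := hp
  refine ⟨e, he, hpe, fun e' he' hpe' => ?_⟩
  by_contra hne
  have hmem := hemb.2.1 e' he' e he hne ⟨hpe', hpe⟩
  rcases hmem.2 with h | h
  · exact hpV (h ▸ (hemb.1 e he).1)
  · exact hpV (h ▸ (hemb.1 e he).2.1)

lemma shared_unique {V : Finset (E n)} {Ed : Finset (E n × E n)}
    (hemb : IsEmbeddedGraph V Ed) {e f : E n × E n}
    (he : e ∈ Ed) (hf : f ∈ Ed) (hef : e ≠ f) {p q : E n}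
    (hp : (p = e.1 ∨ p = e.2) ∧ (p = f.1 ∨ p = f.2))
    (hq : (q = e.1 ∨ q = e.2) ∧ (q = f.1 ∨ q = f.2)) : p = q := by
  by_contra hpq
  have hpaire : (p = e.1 ∧ q = e.2) ∨ (p = e.2 ∧ q = e.1) := by
    rcases hp.1 with h1 | h1 <;> rcases hq.1 with h2 | h2
    · exact absurd (h1.trans h2.symm) hpq
    · exact Or.inl ⟨h1, h2⟩
    · exact Or.inr ⟨h1, h2⟩
    · exact absurd (h1.trans h2.symm) hpq
  have hpairf : (p = f.1 ∧ q = f.2) ∨ (p = f.2 ∧ q = f.1) := by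
    rcases hp.2 with h1 | h1 <;> rcases hq.2 with h2 | h2
    · exact absurd (h1.trans h2.symm) hpq
    · exact Or.inl ⟨h1, h2⟩
    · exact Or.inr ⟨h1, h2⟩
    · exact absurd (h1.trans h2.symm) hpq
  set m : E n := midpoint ℝ p q with hm
  have hmpq : m ∈ segment ℝ p q := midpoint_mem_segment p q
  have hm1 : m ≠ p := fun h' => hpq ((midpoint_eq_left_iff ℝ).1 h')
  have hm2 : m ≠ q := fun h' => hpq ((midpoint_eq_right_iff ℝ).1 h')
  have hme : m ∈ segment ℝ e.1 e.2 := by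
    rcases hpaire with ⟨h1, h2⟩ | ⟨h1, h2⟩
    · rw [← h1, ← h2]; exact hmpq
    · rw [← h2, ← h1, segment_symm]; exact hmpq
  have hmf : m ∈ segment ℝ f.1 f.2 := by
    rcases hpairf with ⟨h1, h2⟩ | ⟨h1, h2⟩
    · rw [← h1, ← h2]; exact hmpq
    · rw [← h2, ← h1, segment_symm]; exact hmpq
  have hmem := hemb.2.1 e he f hf hef ⟨hme, hmf⟩
  rcases hmem.1 with h' | h'
  · rcases hpaire with ⟨h1, h2⟩ | ⟨h1, h2⟩
    · exact hm1 (h'.trans h1.symm)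
    · exact hm2 (h'.trans h2.symm)
  · rcases hpaire with ⟨h1, h2⟩ | ⟨h1, h2⟩
    · exact hm2 (h'.trans h2.symm)
    · exact hm1 (h'.trans h1.symm)

/-- Any short admissible path from `x` (on edge `e`) to `y` (whose only edge is
`f`, not containing `x`) passes through a vertex shared by `e` and `f`. -/
lemma through_vertex {V : Finset (E n)} {Ed : Finset (E n × E n)} {l : ℝ} {G : Set (E n)}
    (hemb : IsEmbeddedGraph V Ed) (hl : ∀ e ∈ Ed, l ≤ dist e.1 e.2)
    (hG : G = graphSet Ed)
    {x y : E n} {e f : E n × E n} (he : e ∈ Ed) (hf : f ∈ Ed)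
    (hxe : x ∈ segment ℝ e.1 e.2) (hye : y ∉ segment ℝ e.1 e.2)
    (hyuniq : ∀ e' ∈ Ed, y ∈ segment ℝ e'.1 e'.2 → e' = f)
    {γ : ℝ → E n} (hγ : Adm G x y γ)
    (hvar : eVariationOn γ (Set.Icc 0 1) < ENNReal.ofReal l) :
    ∃ τ ∈ Set.Icc (0:ℝ) 1, (γ τ = e.1 ∨ γ τ = e.2) ∧ (γ τ = f.1 ∨ γ τ = f.2) := by
  obtain ⟨h1, h2, h3, h4⟩ := hγ
  have hae : γ 0 ∈ segment ℝ e.1 e.2 := by rw [h3]; exact hxe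
  rcases exit_lemma hemb hG he zero_le_one h1 h2 hae with himg | ⟨T, hT, hend⟩
  · exfalso
    have := himg ⟨1, Set.right_mem_Icc.2 zero_le_one, rfl⟩
    rw [h4] at this
    exact hye this
  · have hv0 : γ T ∈ V := by
      rcases hend with h' | h'
      · rw [h']; exact (hemb.1 e he).1
      · rw [h']; exact (hemb.1 e he).2.1
    have hstar := star_lemma hemb hl hG hT.2
      (h1.mono (Set.Icc_subset_Icc hT.1 le_rfl))
      (h2.mono_left (Set.Icc_subset_Icc hT.1 le_rfl)) rfl hv0
      (lt_of_le_of_lt (eVariationOn.mono γ (Set.Icc_subset_Icc hT.1 le_rfl)) hvar)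
    obtain ⟨e', he', hinc, hy'⟩ := hstar 1 ⟨hT.2, le_rfl⟩
    rw [h4] at hy'
    have hef' : e' = f := hyuniq e' he' hy'
    refine ⟨T, hT, hend, ?_⟩
    rcases hinc with h' | h'
    · exact Or.inl (by rw [← hef', h'])
    · exact Or.inr (by rw [← hef', h'])

/-- The broken path through `v`. -/
def broke (x v y : E n) : ℝ → E n :=
  fun t => aff x v (min (2 * t) 1) + aff v y (max (2 * t - 1) 0) - v

lemma broke_cont (x v y : E n) : Continuous (broke x v y) := by
  unfold broke aff
  fun_prop

@[simp] lemma broke_zero (x v y : E n) : broke x v y 0 = x := by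
  unfold broke
  norm_num

@[simp] lemma broke_one (x v y : E n) : broke x v y 1 = y := by
  unfold broke
  norm_num

lemma broke_left {x v y : E n} {t : ℝ} (ht : t ≤ 1/2) : broke x v y t = aff x v (2 * t) := by
  unfold broke
  rw [min_eq_left (by linarith), max_eq_right (by linarith)]
  simp [aff]

lemma broke_right {x v y : E n} {t : ℝ} (ht : 1/2 ≤ t) :
    broke x v y t = aff v y (2 * t - 1) := by
  unfold broke
  rw [min_eq_right (by linarith), max_eq_left (by linarith)]
  simp [aff]

lemma broke_maps {x v y : E n} {t : ℝ} (ht : t ∈ Set.Icc (0:ℝ) 1) :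
    broke x v y t ∈ segment ℝ x v ∪ segment ℝ v y := by
  rcases le_total t (1/2) with h | h
  · left
    rw [broke_left h]
    exact aff_mem ⟨by linarith [ht.1], by linarith⟩
  · right
    rw [broke_right h]
    exact aff_mem ⟨by linarith, by linarith [ht.2]⟩

lemma image_double : (fun t : ℝ => 2 * t) '' Set.Icc 0 (1/2) = Set.Icc 0 1 := by
  ext z
  constructor
  · rintro ⟨t, ht, rfl⟩
    simp only [Set.mem_Icc] at ht ⊢
    constructor <;> linarith
  · intro hz
    simp only [Set.mem_Icc] at hz
    exact ⟨z / 2, ⟨by linarith, by linarith⟩, by ring⟩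

lemma image_double' : (fun t : ℝ => 2 * t - 1) '' Set.Icc (1/2) 1 = Set.Icc 0 1 := by
  ext z
  constructor
  · rintro ⟨t, ht, rfl⟩
    simp only [Set.mem_Icc] at ht ⊢
    constructor <;> linarith
  · intro hz
    simp only [Set.mem_Icc] at hz
    exact ⟨(z + 1) / 2, ⟨by linarith, by linarith⟩, by ring⟩

lemma broke_evar (x v y : E n) :
    eVariationOn (broke x v y) (Set.Icc 0 1) = edist x v + edist v y := by
  rw [← evar_split (γ := broke x v y) (a := (0:ℝ)) (b := 1/2) (c := 1) (by norm_num) (by norm_num)]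
  congr 1
  · have heq : Set.EqOn (broke x v y) ((aff x v) ∘ (fun t => 2 * t)) (Set.Icc 0 (1/2)) :=
      fun t ht => broke_left ht.2
    rw [eVariationOn.eq_of_eqOn heq,
      eVariationOn.comp_eq_of_monotoneOn (aff x v) _
        (fun u _ w _ huw => by simpa using (by linarith : 2 * u ≤ 2 * w)),
      image_double, aff_evar]
  · have heq : Set.EqOn (broke x v y) ((aff v y) ∘ (fun t => 2 * t - 1)) (Set.Icc (1/2) 1) :=
      fun t ht => broke_right ht.1
    rw [eVariationOn.eq_of_eqOn heq,
      eVariationOn.comp_eq_of_monotoneOn (aff v y) _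
        (fun u _ w _ huw => by simpa using (by linarith : 2 * u - 1 ≤ 2 * w - 1)),
      image_double', aff_evar]

lemma broke_image (x v y : E n) :
    broke x v y '' Set.Icc 0 1 = segment ℝ x v ∪ segment ℝ v y := by
  have h1 : Set.Icc (0:ℝ) 1 = Set.Icc 0 (1/2) ∪ Set.Icc (1/2) 1 :=
    (Set.Icc_union_Icc_eq_Icc (by norm_num) (by norm_num)).symm
  rw [h1, Set.image_union]
  congr 1
  · rw [Set.image_congr (fun t ht => broke_left ht.2)]
    have h2 : (fun t : ℝ => aff x v (2 * t)) '' Set.Icc 0 (1/2)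
        = (aff x v) '' ((fun t : ℝ => 2 * t) '' Set.Icc 0 (1/2)) := by
      rw [← Set.image_comp]; rfl
    rw [h2, image_double, aff_image]
  · rw [Set.image_congr (fun t ht => broke_right ht.1)]
    have h2 : (fun t : ℝ => aff v y (2 * t - 1)) '' Set.Icc (1/2) 1
        = (aff v y) '' ((fun t : ℝ => 2 * t - 1) '' Set.Icc (1/2) 1) := by
      rw [← Set.image_comp]; rfl
    rw [h2, image_double', aff_image]

lemma case1 {V : Finset (E n)} {Ed : Finset (E n × E n)} {G : Set (E n)}
    (hemb : IsEmbeddedGraph V Ed) (hG : G = graphSet Ed) {x y : E n} {e : E n × E n}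
    (he : e ∈ Ed) (hxe : x ∈ segment ℝ e.1 e.2) (hye : y ∈ segment ℝ e.1 e.2) :
    ∃ A : Set (E n),
      (∃ γ : ℝ → E n, ContinuousOn γ (Set.Icc 0 1) ∧
        Set.MapsTo γ (Set.Icc 0 1) G ∧ γ 0 = x ∧ γ 1 = y ∧
        eVariationOn γ (Set.Icc 0 1) = dG G x y ∧ γ '' Set.Icc 0 1 = A) ∧
      (∀ γ : ℝ → E n, ContinuousOn γ (Set.Icc 0 1) →
        Set.MapsTo γ (Set.Icc 0 1) G → γ 0 = x → γ 1 = y →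
        eVariationOn γ (Set.Icc 0 1) = dG G x y → γ '' Set.Icc 0 1 = A) ∧
      ((A ∩ ↑V) \ {x, y}).Subsingleton := by
  have hsegG : segment ℝ x y ⊆ G := fun z hz =>
    (hG ▸ seg_subset_graph he) ((convex_segment e.1 e.2).segment_subset hxe hye hz)
  have hadm : Adm G x y (aff x y) :=
    ⟨(aff_cont x y).continuousOn, fun t ht => hsegG (aff_mem ht), aff_zero x y, aff_one x y⟩
  have hdG : dG G x y = edist x y := by
    refine le_antisymm ?_ ?_
    · exact (dG_le hadm).trans (aff_evar x y).le
    · refine le_dG fun γ hγ => ?_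
      obtain ⟨h1, h2, h3, h4⟩ := hγ
      have h5 := eVariationOn.edist_le γ (Set.left_mem_Icc.2 zero_le_one)
        (Set.right_mem_Icc.2 zero_le_one)
      rw [h3, h4] at h5
      exact h5
  have huniq : ∀ γ : ℝ → E n, ContinuousOn γ (Set.Icc 0 1) →
      Set.MapsTo γ (Set.Icc 0 1) G → γ 0 = x → γ 1 = y →
      eVariationOn γ (Set.Icc 0 1) = dG G x y → γ '' Set.Icc 0 1 = segment ℝ x y := by
    intro γ h1 h2 h3 h4 h5
    have h6 : eVariationOn γ (Set.Icc 0 1) = edist (γ 0) (γ 1) := by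
      rw [h5, hdG, h3, h4]
    have h7 := image_eq_segment zero_le_one h1 h6
    rwa [h3, h4] at h7
  have hempt : ∀ w, w ∈ (segment ℝ x y ∩ ↑V) \ {x, y} → False := by
    rintro w ⟨⟨hwseg, hwV⟩, hwxy⟩
    simp only [Set.mem_insert_iff, Set.mem_singleton_iff] at hwxy
    push_neg at hwxy
    have hwe : w ∈ segment ℝ e.1 e.2 := (convex_segment e.1 e.2).segment_subset hxe hye hwseg
    have hne : e.1 ≠ e.2 := (hemb.1 e he).2.2
    rcases hemb.2.2 w hwV e he hwe with h | h
    · rcases endpoint_mem_segment hne hxe hye (h ▸ hwseg) with h' | h'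
      · exact hwxy.1 (h.trans h')
      · exact hwxy.2 (h.trans h')
    · have hxe' : x ∈ segment ℝ e.2 e.1 := by rw [segment_symm]; exact hxe
      have hye' : y ∈ segment ℝ e.2 e.1 := by rw [segment_symm]; exact hye
      rcases endpoint_mem_segment (Ne.symm hne) hxe' hye' (h ▸ hwseg) with h' | h'
      · exact hwxy.1 (h.trans h')
      · exact hwxy.2 (h.trans h')
  refine ⟨segment ℝ x y, ⟨aff x y, hadm.1, hadm.2.1, hadm.2.2.1, hadm.2.2.2,
      by rw [aff_evar, hdG],
      huniq _ hadm.1 hadm.2.1 hadm.2.2.1 hadm.2.2.2 (by rw [aff_evar, hdG])⟩,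
    huniq, fun p hp q hq => absurd hp (fun h => (hempt p h))⟩

lemma case2 {V : Finset (E n)} {Ed : Finset (E n × E n)} {l : ℝ} {G : Set (E n)}
    (hemb : IsEmbeddedGraph V Ed) (hl : ∀ e ∈ Ed, l ≤ dist e.1 e.2)
    (hG : G = graphSet Ed) {x y : E n} {e f : E n × E n}
    (he : e ∈ Ed) (hf : f ∈ Ed) (hef : e ≠ f)
    (hxe : x ∈ segment ℝ e.1 e.2) (hyf : y ∈ segment ℝ f.1 f.2)
    (hye : y ∉ segment ℝ e.1 e.2)
    (hyuniq : ∀ e' ∈ Ed, y ∈ segment ℝ e'.1 e'.2 → e' = f)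
    (hxy : dG G x y < ENNReal.ofReal l)
    {v : E n} (hv : (v = e.1 ∨ v = e.2) ∧ (v = f.1 ∨ v = f.2)) :
    ∃ A : Set (E n),
      (∃ γ : ℝ → E n, ContinuousOn γ (Set.Icc 0 1) ∧
        Set.MapsTo γ (Set.Icc 0 1) G ∧ γ 0 = x ∧ γ 1 = y ∧
        eVariationOn γ (Set.Icc 0 1) = dG G x y ∧ γ '' Set.Icc 0 1 = A) ∧
      (∀ γ : ℝ → E n, ContinuousOn γ (Set.Icc 0 1) →
        Set.MapsTo γ (Set.Icc 0 1) G → γ 0 = x → γ 1 = y →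
        eVariationOn γ (Set.Icc 0 1) = dG G x y → γ '' Set.Icc 0 1 = A) ∧
      ((A ∩ ↑V) \ {x, y}).Subsingleton := by
  have huniqv : ∀ w : E n, (w = e.1 ∨ w = e.2) ∧ (w = f.1 ∨ w = f.2) → w = v :=
    fun w hw => shared_unique hemb he hf hef hw hv
  have hve : v ∈ segment ℝ e.1 e.2 := by
    rcases hv.1 with h | h <;> rw [h]
    · exact left_mem_segment ℝ e.1 e.2
    · exact right_mem_segment ℝ e.1 e.2
  have hvf : v ∈ segment ℝ f.1 f.2 := by
    rcases hv.2 with h | h <;> rw [h]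
    · exact left_mem_segment ℝ f.1 f.2
    · exact right_mem_segment ℝ f.1 f.2
  have hsub1 : segment ℝ x v ⊆ segment ℝ e.1 e.2 :=
    (convex_segment e.1 e.2).segment_subset hxe hve
  have hsub2 : segment ℝ v y ⊆ segment ℝ f.1 f.2 :=
    (convex_segment f.1 f.2).segment_subset hvf hyf
  have hAG : segment ℝ x v ∪ segment ℝ v y ⊆ G := by
    rintro z (hz | hz)
    · exact (hG ▸ seg_subset_graph he) (hsub1 hz)
    · exact (hG ▸ seg_subset_graph hf) (hsub2 hz)
  have hadm : Adm G x y (broke x v y) :=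
    ⟨(broke_cont x v y).continuousOn, fun t ht => hAG (broke_maps ht),
      broke_zero x v y, broke_one x v y⟩
  set ED : ℝ≥0∞ := edist x v + edist v y with hED
  have hEDne : ED ≠ ⊤ := ENNReal.add_ne_top.2 ⟨edist_ne_top _ _, edist_ne_top _ _⟩
  have hthrough : ∀ γ : ℝ → E n, Adm G x y γ →
      eVariationOn γ (Set.Icc 0 1) < ENNReal.ofReal l → ∃ τ ∈ Set.Icc (0:ℝ) 1, γ τ = v := by
    intro γ hγ hvlt
    obtain ⟨τ, hτ, h⟩ := through_vertex hemb hl hG he hf hxe hye hyuniq hγ hvlt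
    exact ⟨τ, hτ, huniqv _ h⟩
  have hlow : ∀ γ : ℝ → E n, Adm G x y γ →
      min (ENNReal.ofReal l) ED ≤ eVariationOn γ (Set.Icc 0 1) := by
    intro γ hγ
    rcases lt_or_ge (eVariationOn γ (Set.Icc 0 1)) (ENNReal.ofReal l) with hlt | hge
    · obtain ⟨τ, hτ, hvτ⟩ := hthrough γ hγ hlt
      have ha' : edist x v ≤ eVariationOn γ (Set.Icc 0 τ) := by
        have h0 := eVariationOn.edist_le γ (Set.left_mem_Icc.2 hτ.1) (Set.right_mem_Icc.2 hτ.1)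
        rwa [hγ.2.2.1, hvτ] at h0
      have hb' : edist v y ≤ eVariationOn γ (Set.Icc τ 1) := by
        have h0 := eVariationOn.edist_le γ (Set.left_mem_Icc.2 hτ.2) (Set.right_mem_Icc.2 hτ.2)
        rwa [hγ.2.2.2, hvτ] at h0
      calc min (ENNReal.ofReal l) ED ≤ ED := min_le_right _ _
        _ ≤ eVariationOn γ (Set.Icc 0 τ) + eVariationOn γ (Set.Icc τ 1) := add_le_add ha' hb'
        _ = eVariationOn γ (Set.Icc 0 1) := evar_split hτ.1 hτ.2
    · exact (min_le_left _ _).trans hge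
  have hdG : dG G x y = ED := by
    have hup : dG G x y ≤ ED := le_of_le_of_eq (dG_le hadm) (broke_evar x v y)
    refine le_antisymm hup ?_
    have hmin := le_dG hlow
    rcases min_cases (ENNReal.ofReal l) ED with ⟨hmeq, _⟩ | ⟨hmeq, _⟩
    · rw [hmeq] at hmin
      exact absurd hxy (not_lt.2 hmin)
    · rw [hmeq] at hmin
      exact hmin
  have huniq : ∀ γ : ℝ → E n, ContinuousOn γ (Set.Icc 0 1) →
      Set.MapsTo γ (Set.Icc 0 1) G → γ 0 = x → γ 1 = y →
      eVariationOn γ (Set.Icc 0 1) = dG G x y →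
      γ '' Set.Icc 0 1 = segment ℝ x v ∪ segment ℝ v y := by
    intro γ h1 h2 h3 h4 h5
    have hvlt : eVariationOn γ (Set.Icc 0 1) < ENNReal.ofReal l := by rw [h5]; exact hxy
    obtain ⟨τ, hτ, hvτ⟩ := hthrough γ ⟨h1, h2, h3, h4⟩ hvlt
    have hsplit : eVariationOn γ (Set.Icc 0 τ) + eVariationOn γ (Set.Icc τ 1) = ED := by
      rw [evar_split hτ.1 hτ.2, h5, hdG]
    have ha' : edist x v ≤ eVariationOn γ (Set.Icc 0 τ) := by
      have h0 := eVariationOn.edist_le γ (Set.left_mem_Icc.2 hτ.1) (Set.right_mem_Icc.2 hτ.1)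
      rwa [h3, hvτ] at h0
    have hb' : edist v y ≤ eVariationOn γ (Set.Icc τ 1) := by
      have h0 := eVariationOn.edist_le γ (Set.left_mem_Icc.2 hτ.2) (Set.right_mem_Icc.2 hτ.2)
      rwa [hvτ, h4] at h0
    have hv1ne : eVariationOn γ (Set.Icc τ 1) ≠ ⊤ := by
      intro h'
      exact hEDne (by rw [← hsplit, h', add_top])
    have heq1 : eVariationOn γ (Set.Icc 0 τ) = edist x v := by
      refine le_antisymm ?_ ha'
      have h0 : eVariationOn γ (Set.Icc 0 τ) = ED - eVariationOn γ (Set.Icc τ 1) :=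
        ENNReal.eq_sub_of_add_eq hv1ne hsplit
      rw [h0, hED]
      calc edist x v + edist v y - eVariationOn γ (Set.Icc τ 1)
          ≤ edist x v + edist v y - edist v y := tsub_le_tsub_left hb' _
        _ = edist x v := ENNReal.add_sub_cancel_right (edist_ne_top _ _)
    have heq2 : eVariationOn γ (Set.Icc τ 1) = edist v y := by
      have h0 : edist x v + eVariationOn γ (Set.Icc τ 1) = edist x v + edist v y := by
        rw [heq1] at hsplit
        rw [hsplit, hED]
      exact (ENNReal.add_right_inj (edist_ne_top _ _)).1 h0
    have him1 : γ '' Set.Icc 0 τ = segment ℝ x v := by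
      have h0 := image_eq_segment hτ.1 (h1.mono (Set.Icc_subset_Icc le_rfl hτ.2))
        (by rw [heq1, h3, hvτ])
      rwa [h3, hvτ] at h0
    have him2 : γ '' Set.Icc τ 1 = segment ℝ v y := by
      have h0 := image_eq_segment hτ.2 (h1.mono (Set.Icc_subset_Icc hτ.1 le_rfl))
        (by rw [heq2, hvτ, h4])
      rwa [hvτ, h4] at h0
    rw [← Set.Icc_union_Icc_eq_Icc hτ.1 hτ.2, Set.image_union, him1, him2]
  have hvert : ∀ w, w ∈ ((segment ℝ x v ∪ segment ℝ v y) ∩ ↑V) \ {x, y} → w = v := by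
    rintro w ⟨⟨hwA, hwV⟩, hwxy⟩
    simp only [Set.mem_insert_iff, Set.mem_singleton_iff] at hwxy
    push_neg at hwxy
    rcases hwA with hw | hw
    · have hwe : w ∈ segment ℝ e.1 e.2 := hsub1 hw
      have hne : e.1 ≠ e.2 := (hemb.1 e he).2.2
      rcases hemb.2.2 w hwV e he hwe with h | h
      · rcases endpoint_mem_segment hne hxe hve (h ▸ hw) with h' | h'
        · exact absurd (h.trans h') hwxy.1
        · exact h.trans h'
      · have hxe' : x ∈ segment ℝ e.2 e.1 := by rw [segment_symm]; exact hxe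
        have hve' : v ∈ segment ℝ e.2 e.1 := by rw [segment_symm]; exact hve
        rcases endpoint_mem_segment (Ne.symm hne) hxe' hve' (h ▸ hw) with h' | h'
        · exact absurd (h.trans h') hwxy.1
        · exact h.trans h'
    · have hwf : w ∈ segment ℝ f.1 f.2 := hsub2 hw
      have hne : f.1 ≠ f.2 := (hemb.1 f hf).2.2
      rcases hemb.2.2 w hwV f hf hwf with h | h
      · rcases endpoint_mem_segment hne hvf hyf (h ▸ hw) with h' | h'
        · exact h.trans h'
        · exact absurd (h.trans h') hwxy.2
      · have hvf' : v ∈ segment ℝ f.2 f.1 := by rw [segment_symm]; exact hvf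
        have hyf' : y ∈ segment ℝ f.2 f.1 := by rw [segment_symm]; exact hyf
        rcases endpoint_mem_segment (Ne.symm hne) hvf' hyf' (h ▸ hw) with h' | h'
        · exact h.trans h'
        · exact absurd (h.trans h') hwxy.2
  exact ⟨segment ℝ x v ∪ segment ℝ v y,
    ⟨broke x v y, hadm.1, hadm.2.1, hadm.2.2.1, hadm.2.2.2, by rw [broke_evar, hdG],
      huniq _ hadm.1 hadm.2.1 hadm.2.2.1 hadm.2.2.2 (by rw [broke_evar, hdG])⟩,
    huniq, fun p hp q hq => (hvert p hp).trans (hvert q hq).symm⟩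

end Graph

end Stmt5Aux

/-- if `d_G(x,y) < l` then the shortest path from `x` to `y` in
`G` is unique (it exists, and every length-minimizing path has the same image
`A`), and its interior contains at most one vertex of `G`. -/
theorem stmt5 {n : ℕ} (V : Finset (E n)) (Ed : Finset (E n × E n))
    (hEd : Ed.Nonempty) (hemb : IsEmbeddedGraph V Ed)
    (l : ℝ) (hl : IsMinEdgeLength Ed l) (hl0 : 0 < l)
    (G : Set (E n)) (hG : G = graphSet Ed)
    (x y : E n) (hx : x ∈ G) (hy : y ∈ G)
    (hxy : dG G x y < ENNReal.ofReal l) :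
    ∃ A : Set (E n),
      (∃ γ : ℝ → E n, ContinuousOn γ (Set.Icc 0 1) ∧
        Set.MapsTo γ (Set.Icc 0 1) G ∧ γ 0 = x ∧ γ 1 = y ∧
        eVariationOn γ (Set.Icc 0 1) = dG G x y ∧ γ '' Set.Icc 0 1 = A) ∧
      (∀ γ : ℝ → E n, ContinuousOn γ (Set.Icc 0 1) →
        Set.MapsTo γ (Set.Icc 0 1) G → γ 0 = x → γ 1 = y →
        eVariationOn γ (Set.Icc 0 1) = dG G x y → γ '' Set.Icc 0 1 = A) ∧
      ((A ∩ ↑V) \ {x, y}).Subsingleton := by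
  classical
  by_cases hse : ∃ e ∈ Ed, x ∈ segment ℝ e.1 e.2 ∧ y ∈ segment ℝ e.1 e.2
  · obtain ⟨e, he, hxe, hye⟩ := hse
    exact Stmt5Aux.case1 hemb hG he hxe hye
  · push_neg at hse
    obtain ⟨γ0, hγ0, hvar0⟩ := Stmt5Aux.exists_adm_lt hxy
    have hxV : x ∉ V := by
      intro hxV
      have hstar := Stmt5Aux.star_lemma hemb hl.1 hG zero_le_one hγ0.1 hγ0.2.1
        hγ0.2.2.1 hxV hvar0
      obtain ⟨e', he', hinc, hy'⟩ := hstar 1 (Set.right_mem_Icc.2 zero_le_one)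
      rw [hγ0.2.2.2] at hy'
      have hxe' : x ∈ segment ℝ e'.1 e'.2 := by
        rcases hinc with h | h
        · rw [← h]; exact left_mem_segment ℝ _ _
        · rw [← h]; exact right_mem_segment ℝ _ _
      exact hse e' he' hxe' hy'
    have hyV : y ∉ V := by
      intro hyV
      obtain ⟨hrev, hveq⟩ := Stmt5Aux.adm_reverse hγ0
      have hvarr : eVariationOn (γ0 ∘ fun t => 1 - t) (Set.Icc 0 1) < ENNReal.ofReal l := by
        rw [hveq]; exact hvar0
      have hstar := Stmt5Aux.star_lemma hemb hl.1 hG zero_le_one hrev.1 hrev.2.1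
        hrev.2.2.1 hyV hvarr
      obtain ⟨e', he', hinc, hx'⟩ := hstar 1 (Set.right_mem_Icc.2 zero_le_one)
      have hco : (γ0 ∘ fun t => 1 - t) 1 = x := hrev.2.2.2
      rw [hco] at hx'
      have hye' : y ∈ segment ℝ e'.1 e'.2 := by
        rcases hinc with h | h
        · rw [← h]; exact left_mem_segment ℝ _ _
        · rw [← h]; exact right_mem_segment ℝ _ _
      exact hse e' he' hx' hye'
    obtain ⟨e, he, hxe, hxuniq⟩ := Stmt5Aux.unique_edge hemb hG hxV hx
    obtain ⟨f, hf, hyf, hyuniq⟩ := Stmt5Aux.unique_edge hemb hG hyV hy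
    have hef : e ≠ f := fun h => hse e he hxe (by rw [h]; exact hyf)
    have hye : y ∉ segment ℝ e.1 e.2 := hse e he hxe
    obtain ⟨τ0, hτ0, hv0⟩ := Stmt5Aux.through_vertex hemb hl.1 hG he hf hxe hye
      hyuniq hγ0 hvar0
    exact Stmt5Aux.case2 hemb hl.1 hG he hf hef hxe hyf hye hyuniq hxy hv0
end
end

section
/- Let e₁ and e₂ be two line segments in ℝⁿ emanating from a common point v with angle α ∈ (0, π) between them. If x ∈ e₁ and y ∈ e₂ satisfy ‖x − y‖ < 2ε, then min(‖x − v‖, ‖y − v‖) < ε / sin(α/2). -/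
noncomputable section
open Set InnerProductGeometry

/-- if `x` and `y` lie on two segments emanating from `v` with
angle `α ∈ (0, π)` and `‖x - y‖ < 2ε`, then
`min(‖x - v‖, ‖y - v‖) < ε / sin(α/2)`. -/
theorem stmt7 {n : ℕ} (v x y : E n) (d₁ d₂ : E n)
    (hd₁ : ‖d₁‖ = 1) (hd₂ : ‖d₂‖ = 1)
    (s t : ℝ) (hs : 0 ≤ s) (ht : 0 ≤ t)
    (hx : x = v + s • d₁) (hy : y = v + t • d₂)
    (α : ℝ) (hα : α = InnerProductGeometry.angle d₁ d₂)
    (hα0 : 0 < α) (hαπ : α < Real.pi)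
    (ε : ℝ) (hε : 0 < ε) (hxy : dist x y < 2 * ε) :
    min (dist x v) (dist y v) < ε / Real.sin (α / 2) := by
  set c : ℝ := Real.cos α with hcdef
  have hsin : 0 < Real.sin (α / 2) :=
    Real.sin_pos_of_pos_of_lt_pi (by linarith) (by linarith [Real.pi_pos])
  have hinner : (inner ℝ d₁ d₂ : ℝ) = c := by
    have := InnerProductGeometry.cos_angle d₁ d₂
    rw [hd₁, hd₂] at this
    rw [hcdef, hα, this]; ring
  have hdxv : dist x v = s := by
    rw [hx, dist_eq_norm]
    simp [norm_smul, abs_of_nonneg hs, hd₁]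
  have hdyv : dist y v = t := by
    rw [hy, dist_eq_norm]
    simp [norm_smul, abs_of_nonneg ht, hd₂]
  set m : ℝ := min s t with hm
  have hms : m ≤ s := min_le_left _ _
  have hmt : m ≤ t := min_le_right _ _
  have hm0 : 0 ≤ m := le_min hs ht
  have hsq : dist x y ^ 2 = s ^ 2 + t ^ 2 - 2 * s * t * c := by
    rw [hx, hy, dist_eq_norm]
    have hxy' : (v + s • d₁) - (v + t • d₂) = s • d₁ - t • d₂ := by abel
    rw [hxy', @norm_sub_sq_real]
    rw [real_inner_smul_left, real_inner_smul_right, hinner]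
    simp [norm_smul, abs_of_nonneg hs, abs_of_nonneg ht, hd₁, hd₂]
    ring
  have hsinsq : Real.sin (α / 2) ^ 2 = (1 - c) / 2 := by
    have h := Real.cos_sq (α / 2)
    rw [show 2 * (α / 2) = α by ring] at h
    have h2 := Real.sin_sq_add_cos_sq (α / 2)
    linarith
  have hc1 : c ≤ 1 := Real.cos_le_one α
  -- key inequality : (2 m sin(α/2))^2 ≤ dist x y ^ 2
  have hkey : (2 * m * Real.sin (α / 2)) ^ 2 ≤ dist x y ^ 2 := by
    rw [hsq]
    have hstm : m * m ≤ s * t := mul_le_mul hms hmt hm0 hs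
    nlinarith [sq_nonneg (s - t), mul_nonneg (sub_nonneg.2 hc1) (sub_nonneg.2 hstm)]
  have h2 : 2 * m * Real.sin (α / 2) ≤ dist x y := by
    have h0 : 0 ≤ 2 * m * Real.sin (α / 2) := by positivity
    nlinarith [dist_nonneg (x := x) (y := y)]
  have : m * Real.sin (α / 2) < ε := by linarith
  rw [hdxv, hdyv, ← hm, lt_div_iff₀ hsin]
  exact this
end
end

section
/- Let M ⊆ ℝ² be a smooth simple closed curve with injectivity radius τ, 0 < ε < τ, and x, y ∈ M consecutive sample points with ‖x − y‖ ≤ 2ε whose ε-balls cover the arc of M between them. Then the orthogonal projection onto the chord line through x and y, restricted to the arc of M from x to y, is injective. -/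
set_option maxHeartbeats 1000000



noncomputable section
open Metric Set

namespace Stmt16

local notation "⟪" x ", " y "⟫" => (inner ℝ x y : ℝ)

lemma hasDerivAt_γ (c : SmoothClosedCurve) (t : ℝ) : HasDerivAt c.γ (deriv c.γ t) t :=
  (c.smooth.differentiable (by simp) t).hasDerivAt

lemma continuous_γ (c : SmoothClosedCurve) : Continuous c.γ := c.smooth.continuous

lemma γ_fract (c : SmoothClosedCurve) (t : ℝ) : c.γ (Int.fract t) = c.γ t := by
  have := c.periodic.sub_int_mul_eq (x := t) ⌊t⌋
  rw [mul_one] at this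
  rw [Int.fract, this]

lemma γ_inj_near (c : SmoothClosedCurve) {s t : ℝ} (h : c.γ s = c.γ t)
    (hst : |s - t| < 1) : s = t := by
  have h1 : c.γ (Int.fract s) = c.γ (Int.fract t) := by rw [γ_fract, γ_fract, h]
  have h2 : Int.fract s = Int.fract t :=
    c.inj _ ⟨Int.fract_nonneg s, Int.fract_lt_one s⟩ _
      ⟨Int.fract_nonneg t, Int.fract_lt_one t⟩ h1
  have h3 : s - t = ((⌊s⌋ - ⌊t⌋ : ℤ) : ℝ) := by
    have hs : Int.fract s = s - ⌊s⌋ := rfl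
    have ht : Int.fract t = t - ⌊t⌋ := rfl
    rw [hs, ht] at h2
    push_cast
    linarith
  rw [h3] at hst
  have h4 : |(⌊s⌋ - ⌊t⌋ : ℤ)| < 1 := by
    have : |((⌊s⌋ - ⌊t⌋ : ℤ) : ℝ)| < 1 := hst
    exact_mod_cast this
  have h5 : (⌊s⌋ - ⌊t⌋ : ℤ) = 0 := Int.abs_lt_one_iff.mp h4
  have : s - t = 0 := by rw [h3, h5]; norm_num
  linarith

lemma twoD {d w nv : E2} (hd : d ≠ 0) (h1 : ⟪d, w⟫ = 0) (h2 : ⟪d, nv⟫ = 0)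
    (hnv : ‖nv‖ = 1) : w = ⟪w, nv⟫ • nv := by
  have hnv0 : nv ≠ 0 := by intro h; rw [h, norm_zero] at hnv; norm_num at hnv
  set K := (Submodule.span ℝ {d})ᗮ with hK
  have hmem : ∀ u : E2, ⟪d, u⟫ = 0 → u ∈ K := by
    intro u hu
    rw [hK, Submodule.mem_orthogonal]
    intro v hv
    obtain ⟨a, rfl⟩ := Submodule.mem_span_singleton.mp hv
    rw [real_inner_smul_left, hu, mul_zero]
  have hwK : w ∈ K := hmem w h1
  have hnvK : nv ∈ K := hmem nv h2
  have hdim : Module.finrank ℝ K = 1 := by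
    have h2d : Module.finrank ℝ E2 = 2 := finrank_euclideanSpace_fin
    have hs := Submodule.finrank_add_finrank_orthogonal (K := Submodule.span ℝ {d})
    rw [finrank_span_singleton hd, h2d] at hs
    linarith
  have hle : Submodule.span ℝ {nv} ≤ K := Submodule.span_le.mpr (by simpa using hnvK)
  have hspan : Submodule.span ℝ {nv} = K :=
    Submodule.eq_of_le_of_finrank_eq hle (by rw [finrank_span_singleton hnv0, hdim])
  have hw' : w ∈ Submodule.span ℝ {nv} := hspan ▸ hwK
  obtain ⟨a, ha⟩ := Submodule.mem_span_singleton.mp hw'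
  have haval : ⟪w, nv⟫ = a := by
    rw [← ha, real_inner_smul_left, real_inner_self_eq_norm_sq, hnv]
    ring
  rw [haval, ha]

lemma hasDerivAt_dist2 (c : SmoothClosedCurve) (q : E2) (t : ℝ) :
    HasDerivAt (fun s => ‖c.γ s - q‖ ^ 2) (2 * ⟪deriv c.γ t, c.γ t - q⟫) t := by
  have h1 : HasDerivAt (fun s => c.γ s - q) (deriv c.γ t) t := (hasDerivAt_γ c t).sub_const q
  have h2 := h1.inner ℝ h1
  have h3 : (fun s => ⟪c.γ s - q, c.γ s - q⟫) = fun s => ‖c.γ s - q‖ ^ 2 := by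
    funext s; rw [real_inner_self_eq_norm_sq]
  rw [h3] at h2
  rw [show (2 * ⟪deriv c.γ t, c.γ t - q⟫) = ⟪c.γ t - q, deriv c.γ t⟫ + ⟪deriv c.γ t, c.γ t - q⟫ by
    rw [real_inner_comm]; ring]
  exact h2

lemma exists_global_min (c : SmoothClosedCurve) (p : E2) :
    ∃ t₀ : ℝ, ∀ t : ℝ, ‖c.γ t₀ - p‖ ≤ ‖c.γ t - p‖ := by
  obtain ⟨t₀, _, hmin⟩ := isCompact_Icc.exists_isMinOn (Set.nonempty_Icc.mpr zero_le_one)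
      (f := fun s => ‖c.γ s - p‖) (((continuous_γ c).sub continuous_const).norm.continuousOn)
  refine ⟨t₀, fun t => ?_⟩
  have h1 := hmin ⟨Int.fract_nonneg t, le_of_lt (Int.fract_lt_one t)⟩
  simpa [γ_fract] using h1


section Main

variable {c : SmoothClosedCurve} {n : E2 → E2} {M : Set E2} {r : ℝ}

lemma empty_ball (hn : IsUnitNormalField c n) (hM : M = Set.range c.γ)
    (hinj : Set.InjOn (fun p : E2 × ℝ => p.1 + p.2 • n p.1) {p | p.1 ∈ M ∧ |p.2| < r})
    {t s : ℝ} (hs : |s| < r) {q : E2} (hq : q ∈ M) :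
    |s| ≤ ‖q - (c.γ t + s • n (c.γ t))‖ := by
  by_contra hcon
  push_neg at hcon
  set c₀ := c.γ t + s • n (c.γ t) with hc₀
  obtain ⟨t₁, ht₁⟩ := exists_global_min c c₀
  obtain ⟨tq, rfl⟩ : ∃ tq, c.γ tq = q := by rw [hM] at hq; exact hq
  have hlt : ‖c.γ t₁ - c₀‖ < |s| := lt_of_le_of_lt (ht₁ tq) hcon
  have hminU : IsMinOn (fun u => ‖c.γ u - c₀‖ ^ 2) univ t₁ := by
    intro u _
    have h1 := ht₁ u
    simp only
    exact pow_le_pow_left₀ (norm_nonneg _) h1 2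
  have hloc : IsLocalMin (fun u => ‖c.γ u - c₀‖ ^ 2) t₁ := hminU.isLocalMin Filter.univ_mem
  have h0 : 2 * ⟪deriv c.γ t₁, c.γ t₁ - c₀⟫ = 0 :=
    hloc.hasDerivAt_eq_zero (hasDerivAt_dist2 c c₀ t₁)
  have hcrit : ⟪deriv c.γ t₁, c₀ - c.γ t₁⟫ = 0 := by
    have : ⟪deriv c.γ t₁, c.γ t₁ - c₀⟫ = 0 := by linarith
    rw [← neg_sub, inner_neg_right, this, neg_zero]
  have hrep := twoD (c.regular t₁) hcrit ((hn.2 t₁).2) ((hn.2 t₁).1)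
  set a := ⟪c₀ - c.γ t₁, n (c.γ t₁)⟫ with hadef
  have habs : |a| = ‖c₀ - c.γ t₁‖ := by
    rw [hrep, norm_smul, (hn.2 t₁).1, mul_one, Real.norm_eq_abs]
  have har : |a| < r := by
    rw [habs, norm_sub_rev]
    exact lt_trans hlt hs
  have hmem1 : ((c.γ t₁, a) : E2 × ℝ) ∈ {p : E2 × ℝ | p.1 ∈ M ∧ |p.2| < r} :=
    ⟨by rw [hM]; exact mem_range_self t₁, har⟩
  have hmem2 : ((c.γ t, s) : E2 × ℝ) ∈ {p : E2 × ℝ | p.1 ∈ M ∧ |p.2| < r} :=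
    ⟨by rw [hM]; exact mem_range_self t, hs⟩
  have himg : c.γ t₁ + a • n (c.γ t₁) = c.γ t + s • n (c.γ t) := by
    rw [← hrep]; abel_nf; rw [← hc₀]
  have heq := hinj hmem1 hmem2 himg
  have has : a = s := congrArg Prod.snd heq
  rw [has, norm_sub_rev] at habs
  linarith


lemma fed (hn : IsUnitNormalField c n) (hM : M = Set.range c.γ)
    (hinj : Set.InjOn (fun p : E2 × ℝ => p.1 + p.2 • n p.1) {p | p.1 ∈ M ∧ |p.2| < r})
    (hr0 : 0 < r) (t : ℝ) {q : E2} (hq : q ∈ M) :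
    2 * r * |⟪q - c.γ t, n (c.γ t)⟫| ≤ ‖q - c.γ t‖ ^ 2 := by
  set A := q - c.γ t with hA
  set B := ‖A‖ ^ 2 with hB
  set a := ⟪A, n (c.γ t)⟫ with ha
  have key : ∀ s : ℝ, |s| < r → 2 * s * a ≤ B := by
    intro s hs
    have h := empty_ball hn hM hinj (t := t) hs hq
    have hrw : q - (c.γ t + s • n (c.γ t)) = A - s • n (c.γ t) := by rw [hA]; abel
    have hexp : ‖q - (c.γ t + s • n (c.γ t))‖ ^ 2 = B - 2 * s * a + s ^ 2 := by
      rw [hrw, norm_sub_sq_real, real_inner_smul_right, norm_smul, (hn.2 t).1,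
        mul_one, Real.norm_eq_abs, sq_abs, ← ha, ← hB]
      ring
    nlinarith [sq_abs s, abs_nonneg s, norm_nonneg (q - (c.γ t + s • n (c.γ t)))]
  rcases le_or_gt (2 * r * |a|) B with h | h
  · exact h
  · exfalso
    have hB0 : 0 ≤ B := sq_nonneg _
    have ha0 : 0 < |a| := by nlinarith
    set sb := (B / (2 * |a|) + r) / 2 with hsb
    have hq1 : B / (2 * |a|) < r := by
      rw [div_lt_iff₀ (by positivity)]
      linarith
    have hq0 : 0 ≤ B / (2 * |a|) := by positivity
    have hsb1 : B / (2 * |a|) < sb := by rw [hsb]; linarith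
    have hsb2 : sb < r := by rw [hsb]; linarith
    have hsb0 : 0 < sb := by linarith
    set s₀ := if 0 ≤ a then sb else -sb with hs₀
    have habs : |s₀| = sb := by
      rcases le_or_gt 0 a with h' | h'
      · rw [hs₀, if_pos h']; exact abs_of_pos hsb0
      · rw [hs₀, if_neg (not_le.mpr h'), abs_neg]; exact abs_of_pos hsb0
    have hkey := key s₀ (by rw [habs]; exact hsb2)
    have hval : 2 * s₀ * a = 2 * sb * |a| := by
      rw [hs₀]; rcases le_or_gt 0 a with h' | h'
      · rw [if_pos h', abs_of_nonneg h']
      · rw [if_neg (not_le.mpr h'), abs_of_neg h']; ring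
    rw [hval] at hkey
    have : B < 2 * sb * |a| := by
      calc B = B / (2 * |a|) * (2 * |a|) := by field_simp
        _ < sb * (2 * |a|) := by
            apply mul_lt_mul_of_pos_right hsb1 (by positivity)
        _ = 2 * sb * |a| := by ring
    linarith

lemma crit_far (hn : IsUnitNormalField c n) (hM : M = Set.range c.γ)
    (hinj : Set.InjOn (fun p : E2 × ℝ => p.1 + p.2 • n p.1) {p | p.1 ∈ M ∧ |p.2| < r})
    (hr0 : 0 < r) {t : ℝ} {q : E2} (hq : q ∈ M) (hne : q ≠ c.γ t)
    (hcrit : ⟪deriv c.γ t, c.γ t - q⟫ = 0) : 2 * r ≤ ‖q - c.γ t‖ := by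
  by_contra hcon
  push_neg at hcon
  have h1 : ⟪deriv c.γ t, q - c.γ t⟫ = 0 := by
    rw [← neg_sub, inner_neg_right, hcrit, neg_zero]
  have hrep := twoD (c.regular t) h1 ((hn.2 t).2) ((hn.2 t).1)
  set a := ⟪q - c.γ t, n (c.γ t)⟫ with hadef
  have hS : ‖q - c.γ t‖ = |a| := by
    rw [hrep, norm_smul, (hn.2 t).1, mul_one, Real.norm_eq_abs]
  have hS0 : 0 < |a| := by rw [← hS]; exact norm_pos_iff.mpr (sub_ne_zero.mpr hne)
  rw [hS] at hcon
  set sb := (|a| / 2 + r) / 2 with hsb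
  have hsb1 : |a| / 2 < sb := by rw [hsb]; linarith
  have hsb2 : sb < r := by rw [hsb]; linarith
  have hsb0 : 0 < sb := by linarith [abs_nonneg a]
  set s₀ := if 0 ≤ a then sb else -sb with hs₀
  have habs : |s₀| = sb := by
    rcases le_or_gt 0 a with h' | h'
    · rw [hs₀, if_pos h']; exact abs_of_pos hsb0
    · rw [hs₀, if_neg (not_le.mpr h'), abs_neg]; exact abs_of_pos hsb0
  have hball := empty_ball hn hM hinj (t := t) (s := s₀) (by rw [habs]; exact hsb2) hq
  have hrw : q - (c.γ t + s₀ • n (c.γ t)) = (a - s₀) • n (c.γ t) := by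
    rw [sub_smul, ← hrep]; abel
  rw [hrw, norm_smul, (hn.2 t).1, mul_one, Real.norm_eq_abs, habs] at hball
  have hle : a ≤ |a| := le_abs_self a
  have hge : -|a| ≤ a := neg_abs_le a
  have : |a - s₀| < sb := by
    rw [abs_lt]; rw [hs₀]
    rcases le_or_gt 0 a with h' | h'
    · rw [if_pos h']
      constructor <;> nlinarith [abs_of_nonneg h']
    · rw [if_neg (not_le.mpr h')]
      constructor <;> nlinarith [abs_of_neg h']
  linarith


lemma not_isMaxOn_left {f : ℝ → ℝ} {f' t₀ b : ℝ} (hd : HasDerivAt f f' t₀)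
    (hf' : 0 < f') (htb : t₀ < b) : ¬ IsMaxOn f (Icc t₀ b) t₀ := by
  intro hmax
  have hs := hasDerivAt_iff_tendsto_slope.mp hd
  have h1 : ∀ᶠ u in nhdsWithin t₀ {t₀}ᶜ, 0 < slope f t₀ u :=
    hs.eventually (eventually_gt_nhds hf')
  have h2 : ∀ᶠ u in nhdsWithin t₀ (Set.Ioi t₀), 0 < slope f t₀ u :=
    h1.filter_mono (nhdsWithin_mono _ (fun u hu => ne_of_gt hu))
  have h3 : Set.Ioo t₀ b ∈ nhdsWithin t₀ (Set.Ioi t₀) :=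
    Ioo_mem_nhdsGT_of_mem ⟨le_refl t₀, htb⟩
  obtain ⟨u, hu1, hu2⟩ := (h2.and (Filter.eventually_of_mem h3 (fun x h => h))).exists
  rw [slope_def_field] at hu1
  have hle := hmax ⟨le_of_lt hu2.1, le_of_lt hu2.2⟩
  have hpos : 0 < u - t₀ := sub_pos.mpr hu2.1
  have : 0 < (f u - f t₀) / (u - t₀) := hu1
  rw [div_pos_iff] at this
  rcases this with ⟨h5, _⟩ | ⟨_, h6⟩
  · have : f u ≤ f t₀ := hle
    linarith
  · linarith

lemma not_isMaxOn_right {f : ℝ → ℝ} {f' t₀ a : ℝ} (hd : HasDerivAt f f' t₀)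
    (hf' : f' < 0) (hta : a < t₀) : ¬ IsMaxOn f (Icc a t₀) t₀ := by
  intro hmax
  have hs := hasDerivAt_iff_tendsto_slope.mp hd
  have h1 : ∀ᶠ u in nhdsWithin t₀ {t₀}ᶜ, slope f t₀ u < 0 :=
    hs.eventually (eventually_lt_nhds hf')
  have h2 : ∀ᶠ u in nhdsWithin t₀ (Set.Iio t₀), slope f t₀ u < 0 :=
    h1.filter_mono (nhdsWithin_mono _ (fun u hu => ne_of_lt hu))
  have h3 : Set.Ioo a t₀ ∈ nhdsWithin t₀ (Set.Iio t₀) :=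
    Ioo_mem_nhdsLT_of_mem ⟨hta, le_refl t₀⟩
  obtain ⟨u, hu1, hu2⟩ := (h2.and (Filter.eventually_of_mem h3 (fun x h => h))).exists
  rw [slope_def_field] at hu1
  have hle := hmax ⟨le_of_lt hu2.1, le_of_lt hu2.2⟩
  have hneg : u - t₀ < 0 := sub_neg.mpr hu2.2
  rw [div_neg_iff] at hu1
  rcases hu1 with ⟨h5, h6⟩ | ⟨h5, h6⟩
  · have : f u ≤ f t₀ := hle
    linarith
  · linarith


lemma core (hn : IsUnitNormalField c n) (hM : M = Set.range c.γ)
    (hinj : Set.InjOn (fun p : E2 × ℝ => p.1 + p.2 • n p.1) {p | p.1 ∈ M ∧ |p.2| < r})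
    {ε : ℝ} (hε0 : 0 < ε) (hεr : ε < r)
    {a b : ℝ} {X Y : E2}
    (hcov : c.γ '' Icc a b ⊆ ball X ε ∪ ball Y ε)
    {s_m t_Y : ℝ} (hsm : s_m ∈ Icc a b) (htY : t_Y ∈ Icc a b)
    (hYeq : c.γ t_Y = Y) (hXM : X ∈ M)
    (hwY : c.γ s_m ≠ Y)
    (hcrit : ⟪deriv c.γ s_m, c.γ s_m - Y⟫ = 0) : False := by
  have hr0 : 0 < r := lt_trans hε0 hεr
  set w := c.γ s_m with hw
  have hYM : Y ∈ M := by rw [hM, ← hYeq]; exact mem_range_self t_Y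
  have hwM : w ∈ M := by rw [hM]; exact mem_range_self s_m
  have hS2r : 2 * r ≤ ‖Y - w‖ :=
    crit_far hn hM hinj hr0 hYM (fun h => hwY h.symm) hcrit
  set S := ‖Y - w‖ with hSdef
  have hS0 : 0 < S := by linarith
  set u : E2 := S⁻¹ • (Y - w) with hu
  have hu1 : ‖u‖ = 1 := by
    rw [hu, norm_smul, Real.norm_eq_abs, abs_of_pos (inv_pos.mpr hS0), ← hSdef]
    field_simp
  -- u is (plus/minus) the normal at w
  have h1 : ⟪deriv c.γ s_m, Y - w⟫ = 0 := by
    rw [← neg_sub, inner_neg_right, hcrit, neg_zero]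
  have hrep := twoD (c.regular s_m) h1 ((hn.2 s_m).2) ((hn.2 s_m).1)
  set α := ⟪Y - w, n w⟫ with hα
  have hαS : |α| = S := by
    rw [hSdef, hrep, norm_smul, (hn.2 s_m).1, mul_one, Real.norm_eq_abs]
  -- Fed inequality in direction u
  have fedu : ∀ q ∈ M, 2 * r * |⟪q - w, u⟫| ≤ ‖q - w‖ ^ 2 := by
    intro q hq
    have h2 := fed hn hM hinj hr0 s_m (q := q) hq
    have h3 : ⟪q - w, u⟫ = S⁻¹ * (α * ⟪q - w, n w⟫) := by
      rw [hu, real_inner_smul_right, hrep, real_inner_smul_right]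
    have h4 : |⟪q - w, u⟫| = |⟪q - w, n w⟫| := by
      rw [h3, abs_mul, abs_mul, abs_inv, hαS, abs_of_pos hS0]
      field_simp
    rw [h4]
    exact h2
  -- w is in the X-ball
  have hwX : dist w X < ε := by
    rcases hcov (mem_image_of_mem _ hsm) with h | h
    · exact mem_ball.mp h
    · exfalso
      have : dist w Y < ε := mem_ball.mp h
      rw [dist_eq_norm, norm_sub_rev] at this
      linarith
  -- the coordinate function v
  set v : ℝ → ℝ := fun s₁ => ⟪c.γ s₁ - w, u⟫ with hv
  have hvm : v s_m = 0 := by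
    rw [hv]; simp [← hw]
  have hvY : v t_Y = S := by
    rw [hv]; simp only [hYeq]
    rw [hu, real_inner_smul_right, real_inner_self_eq_norm_sq, ← hSdef]
    field_simp
  set vstar := r + ε / 2 with hvstar
  have hvs1 : 0 ≤ vstar := by rw [hvstar]; linarith
  have hvs2 : vstar ≤ S := by rw [hvstar]; linarith
  have hcont : ContinuousOn v (uIcc s_m t_Y) :=
    (((continuous_γ c).sub continuous_const).inner continuous_const).continuousOn
  have hmemv : vstar ∈ uIcc (v s_m) (v t_Y) := by
    rw [hvm, hvY, uIcc_of_le (le_of_lt hS0)]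
    exact ⟨hvs1, hvs2⟩
  obtain ⟨s_c, hsc, hvsc⟩ := intermediate_value_uIcc hcont hmemv
  have hscab : s_c ∈ Icc a b := by
    have h5 : uIcc s_m t_Y ⊆ Icc a b := by
      rw [uIcc_eq_union]
      exact union_subset (Icc_subset_Icc hsm.1 htY.2) (Icc_subset_Icc htY.1 hsm.2)
    exact h5 hsc
  set P := c.γ s_c with hP
  have hPM : P ∈ M := by rw [hM]; exact mem_range_self s_c
  have hvP : ⟪P - w, u⟫ = vstar := hvsc
  rcases hcov (mem_image_of_mem _ hscab) with hPX | hPY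
  · -- P in the X ball : contradiction
    have hPXd : ‖P - X‖ < ε := by
      have := mem_ball.mp hPX; rwa [dist_eq_norm] at this
    have hXw : ‖X - w‖ < ε := by
      have := hwX; rw [dist_eq_norm, norm_sub_rev] at this; exact this
    have f1 := fedu X hXM
    have hsplit : ⟪P - w, u⟫ = ⟪P - X, u⟫ + ⟪X - w, u⟫ := by
      rw [← inner_add_left]
      congr 1
      abel
    have hPXu : ⟪P - X, u⟫ ≤ ε := by
      calc ⟪P - X, u⟫ ≤ ‖P - X‖ * ‖u‖ := real_inner_le_norm _ _
        _ = ‖P - X‖ := by rw [hu1, mul_one]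
        _ ≤ ε := le_of_lt hPXd
    have hXwu : 2 * r * ⟪X - w, u⟫ ≤ ε ^ 2 := by
      have h7 : ‖X - w‖ ^ 2 < ε ^ 2 := by nlinarith [norm_nonneg (X - w)]
      have h8 : ⟪X - w, u⟫ ≤ |⟪X - w, u⟫| := le_abs_self _
      nlinarith [f1]
    rw [hvP] at hsplit
    have h10 : 2 * r * (r + ε / 2) ≤ 2 * r * ε + ε ^ 2 := by
      have h11 : 2 * r * ⟪P - X, u⟫ ≤ 2 * r * ε :=
        mul_le_mul_of_nonneg_left hPXu (by positivity)
      have h12 : 2 * r * vstar = 2 * r * ⟪P - X, u⟫ + 2 * r * ⟪X - w, u⟫ := by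
        rw [hsplit]; ring
      rw [← hvstar]
      linarith
    nlinarith [mul_pos (show (0:ℝ) < 2 * r + ε by linarith) (sub_pos.mpr hεr)]
  · -- P in the Y ball : contradiction
    have hPYd : ‖P - Y‖ < ε := by
      have := mem_ball.mp hPY; rwa [dist_eq_norm] at this
    have f2 := fedu P hPM
    rw [hvP] at f2
    have habs2 : |vstar| = vstar := abs_of_nonneg hvs1
    rw [habs2] at f2
    have hPYsq : ‖P - Y‖ ^ 2 = ‖P - w‖ ^ 2 - 2 * S * vstar + S ^ 2 := by
      have h9 : P - Y = (P - w) - S • u := by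
        have : S • u = Y - w := by
          rw [hu, smul_smul, mul_inv_cancel₀ (ne_of_gt hS0), one_smul]
        rw [this]; abel
      rw [h9, norm_sub_sq_real, real_inner_smul_right, hvP, norm_smul,
        Real.norm_eq_abs, abs_of_pos hS0, hu1, mul_one]
      ring
    have hPY2 : ‖P - Y‖ ^ 2 < ε ^ 2 := by nlinarith [norm_nonneg (P - Y)]
    have hSε : ε < S := by linarith
    have f2' : 2 * r * (r + ε / 2) ≤ ‖P - w‖ ^ 2 := by rw [← hvstar]; exact f2
    have hPYsq' : ‖P - Y‖ ^ 2 = ‖P - w‖ ^ 2 - 2 * S * (r + ε / 2) + S ^ 2 := by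
      rw [← hvstar]; exact hPYsq
    nlinarith [mul_nonneg (sub_nonneg.mpr hS2r) (sub_nonneg.mpr (le_of_lt hSε)),
      mul_pos (show (0:ℝ) < 2 * r + ε by linarith) (sub_pos.mpr hεr)]


lemma no_crit (hn : IsUnitNormalField c n) (hM : M = Set.range c.γ)
    (hinj : Set.InjOn (fun p : E2 × ℝ => p.1 + p.2 • n p.1) {p | p.1 ∈ M ∧ |p.2| < r})
    {ε : ℝ} (hε0 : 0 < ε) (hεr : ε < r)
    {a b : ℝ} {x y : E2}
    (hab : a < b) (hb : b < a + 1) (hx : x = c.γ a) (hy : y = c.γ b)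
    (hcov : c.γ '' Icc a b ⊆ ball x ε ∪ ball y ε)
    {t₀ : ℝ} (ht₀ : t₀ ∈ Ioo a b) (hg : ⟪deriv c.γ t₀, y - x⟫ = 0) : False := by
  have hr0 : 0 < r := lt_trans hε0 hεr
  have hxM : x ∈ M := by rw [hM, hx]; exact mem_range_self a
  have hyM : y ∈ M := by rw [hM, hy]; exact mem_range_self b
  set z := c.γ t₀ with hz
  have hzx : z ≠ x := by
    rw [hx, hz]
    intro h
    have h2 := γ_inj_near c h (by rw [abs_sub_lt_iff]; constructor <;> linarith [ht₀.1, ht₀.2])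
    linarith [ht₀.1]
  have hzy : z ≠ y := by
    rw [hy, hz]
    intro h
    have h2 := γ_inj_near c h (by rw [abs_sub_lt_iff]; constructor <;> linarith [ht₀.1, ht₀.2])
    linarith [ht₀.2]
  set K := ⟪deriv c.γ t₀, z - x⟫ with hK
  have hKy : ⟪deriv c.γ t₀, z - y⟫ = K := by
    rw [hK]
    have h3 : z - x = (z - y) + (y - x) := by abel
    rw [h3, inner_add_right, hg, add_zero]
  have ht₀ab : t₀ ∈ Icc a b := ⟨le_of_lt ht₀.1, le_of_lt ht₀.2⟩
  have hK0 : K ≠ 0 := by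
    intro h0
    rcases hcov (mem_image_of_mem _ ht₀ab) with hzb | hzb
    · have h4 := crit_far hn hM hinj hr0 (t := t₀) (q := x) hxM (fun h => hzx h.symm)
        (by rw [← hz, ← hK]; exact h0)
      have h5 : dist z x < ε := mem_ball.mp hzb
      rw [dist_eq_norm, norm_sub_rev] at h5
      linarith
    · have h4 := crit_far hn hM hinj hr0 (t := t₀) (q := y) hyM (fun h => hzy h.symm)
        (by rw [← hz]; rw [hKy] at *; exact hKy ▸ h0)
      have h5 : dist z y < ε := mem_ball.mp hzb
      rw [dist_eq_norm, norm_sub_rev] at h5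
      linarith
  rcases hK0.lt_or_gt with hKneg | hKpos
  · -- K < 0 : take the max of dist^2 to x on [a, t₀]
    obtain ⟨s_m, hsmmem, hsmmax⟩ := isCompact_Icc.exists_isMaxOn
      (nonempty_Icc.mpr (le_of_lt ht₀.1))
      (f := fun s => ‖c.γ s - x‖ ^ 2)
      (((continuous_γ c).sub continuous_const).norm.pow 2).continuousOn
    have hzx2 : 0 < ‖z - x‖ ^ 2 := by
      have h' : z - x ≠ 0 := sub_ne_zero.mpr hzx
      exact pow_pos (norm_pos_iff.mpr h') 2
    have hsma : s_m ≠ a := by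
      intro h
      have h6 := hsmmax (right_mem_Icc.mpr (le_of_lt ht₀.1))
      simp only [h] at h6
      rw [← hx] at h6
      have h7 : ‖c.γ t₀ - x‖ ^ 2 ≤ ‖x - x‖ ^ 2 := h6
      rw [sub_self, norm_zero] at h7
      rw [← hz] at h7
      nlinarith
    have hsmt₀ : s_m ≠ t₀ := by
      intro h
      rw [h] at hsmmax
      exact not_isMaxOn_right (hasDerivAt_dist2 c x t₀)
        (by rw [← hz, ← hK]; linarith) ht₀.1 hsmmax
    have hio : s_m ∈ Ioo a t₀ :=
      ⟨lt_of_le_of_ne hsmmem.1 (Ne.symm hsma), lt_of_le_of_ne hsmmem.2 hsmt₀⟩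
    have hloc : IsLocalMax (fun s => ‖c.γ s - x‖ ^ 2) s_m :=
      hsmmax.isLocalMax (Icc_mem_nhds hio.1 hio.2)
    have h0 : 2 * ⟪deriv c.γ s_m, c.γ s_m - x⟫ = 0 :=
      hloc.hasDerivAt_eq_zero (hasDerivAt_dist2 c x s_m)
    have hcrit2 : ⟪deriv c.γ s_m, c.γ s_m - x⟫ = 0 := by linarith
    have hwx : c.γ s_m ≠ x := by
      rw [hx]
      intro h
      have h2 := γ_inj_near c h
        (by rw [abs_sub_lt_iff]; constructor <;> linarith [hio.1, hio.2, ht₀.2])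
      linarith [hio.1]
    exact core hn hM hinj hε0 hεr (X := y) (Y := x)
      (by rwa [union_comm] at hcov)
      (⟨hsmmem.1, le_trans hsmmem.2 (le_of_lt ht₀.2)⟩)
      (left_mem_Icc.mpr (le_of_lt hab)) hx.symm hyM hwx hcrit2
  · -- K > 0 : take the max of dist^2 to y on [t₀, b]
    obtain ⟨s_m, hsmmem, hsmmax⟩ := isCompact_Icc.exists_isMaxOn
      (nonempty_Icc.mpr (le_of_lt ht₀.2))
      (f := fun s => ‖c.γ s - y‖ ^ 2)
      (((continuous_γ c).sub continuous_const).norm.pow 2).continuousOn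
    have hzy2 : 0 < ‖z - y‖ ^ 2 := by
      have h' : z - y ≠ 0 := sub_ne_zero.mpr hzy
      exact pow_pos (norm_pos_iff.mpr h') 2
    have hsmb : s_m ≠ b := by
      intro h
      have h6 := hsmmax (left_mem_Icc.mpr (le_of_lt ht₀.2))
      simp only [h] at h6
      rw [← hy] at h6
      have h7 : ‖c.γ t₀ - y‖ ^ 2 ≤ ‖y - y‖ ^ 2 := h6
      rw [sub_self, norm_zero] at h7
      rw [← hz] at h7
      nlinarith
    have hsmt₀ : s_m ≠ t₀ := by
      intro h
      rw [h] at hsmmax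
      exact not_isMaxOn_left (hasDerivAt_dist2 c y t₀)
        (by rw [← hz]; rw [hKy]; linarith) ht₀.2 hsmmax
    have hio : s_m ∈ Ioo t₀ b :=
      ⟨lt_of_le_of_ne hsmmem.1 (Ne.symm hsmt₀), lt_of_le_of_ne hsmmem.2 hsmb⟩
    have hloc : IsLocalMax (fun s => ‖c.γ s - y‖ ^ 2) s_m :=
      hsmmax.isLocalMax (Icc_mem_nhds hio.1 hio.2)
    have h0 : 2 * ⟪deriv c.γ s_m, c.γ s_m - y⟫ = 0 :=
      hloc.hasDerivAt_eq_zero (hasDerivAt_dist2 c y s_m)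
    have hcrit2 : ⟪deriv c.γ s_m, c.γ s_m - y⟫ = 0 := by linarith
    have hwy : c.γ s_m ≠ y := by
      rw [hy]
      intro h
      have h2 := γ_inj_near c h
        (by rw [abs_sub_lt_iff]; constructor <;> linarith [hio.1, hio.2, ht₀.1])
      linarith [hio.2]
    exact core hn hM hinj hε0 hεr (X := x) (Y := y) hcov
      (⟨le_trans (le_of_lt ht₀.1) hsmmem.1, hsmmem.2⟩)
      (right_mem_Icc.mpr (le_of_lt hab)) hy.symm hxM hwy hcrit2


lemma rolle_step (hn : IsUnitNormalField c n) (hM : M = Set.range c.γ)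
    (hinj : Set.InjOn (fun p : E2 × ℝ => p.1 + p.2 • n p.1) {p | p.1 ∈ M ∧ |p.2| < r})
    {ε : ℝ} (hε0 : 0 < ε) (hεr : ε < r)
    {a b : ℝ} {x y : E2}
    (hab : a < b) (hb : b < a + 1) (hx : x = c.γ a) (hy : y = c.γ b)
    (hcov : c.γ '' Icc a b ⊆ ball x ε ∪ ball y ε)
    {t1 t2 : ℝ} (h12 : t1 < t2) (ht1 : t1 ∈ Icc a b) (ht2 : t2 ∈ Icc a b)
    (hgeq : ⟪c.γ t1 - x, y - x⟫ = ⟪c.γ t2 - x, y - x⟫) : False := by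
  have hg : ∀ t : ℝ, HasDerivAt (fun s => ⟪c.γ s - x, y - x⟫) (⟪deriv c.γ t, y - x⟫) t := by
    intro t
    have h1 := ((hasDerivAt_γ c t).sub_const x).inner ℝ (hasDerivAt_const t (y - x))
    simpa using h1
  have hcont : ContinuousOn (fun s => ⟪c.γ s - x, y - x⟫) (Icc t1 t2) :=
    (((continuous_γ c).sub continuous_const).inner continuous_const).continuousOn
  obtain ⟨t₀, ht₀, hd0⟩ := exists_deriv_eq_zero h12 hcont hgeq
  have hder : deriv (fun s => ⟪c.γ s - x, y - x⟫) t₀ = ⟪deriv c.γ t₀, y - x⟫ :=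
    (hg t₀).deriv
  rw [hder] at hd0
  exact no_crit hn hM hinj hε0 hεr hab hb hx hy hcov
    ⟨lt_of_le_of_lt ht1.1 ht₀.1, lt_of_lt_of_le ht₀.2 ht2.2⟩ hd0

end Main
end Stmt16


/-- for consecutive sample points `x = γ a`, `y = γ b` at
Euclidean distance `≤ 2ε` whose `ε`-balls cover the arc of `M` between them
(`0 < ε < τ`), the orthogonal projection onto the chord line through `x` and
`y` is injective on the arc. -/
theorem stmt16 (c : SmoothClosedCurve) (n : E2 → E2) (hn : IsUnitNormalField c n)
    (M : Set E2) (hM : M = Set.range c.γ)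
    (τ ε : ℝ) (hτ : τ = injRadius M n) (hε0 : 0 < ε) (hετ : ε < τ)
    (a b : ℝ) (hab : a < b) (hb : b < a + 1)
    (x y : E2) (hx : x = c.γ a) (hy : y = c.γ b) (hne : x ≠ y)
    (hdist : dist x y ≤ 2 * ε)
    (hcov : c.γ '' Set.Icc a b ⊆ Metric.ball x ε ∪ Metric.ball y ε) :
    Set.InjOn
      (fun p : E2 => x + (((inner ℝ (p - x) (y - x) : ℝ)) / ‖y - x‖ ^ 2) • (y - x))
      (c.γ '' Set.Icc a b) := by
  classical
  have hSne : {r : ℝ | 0 < r ∧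
      Set.InjOn (fun p : E2 × ℝ => p.1 + p.2 • n p.1) {p | p.1 ∈ M ∧ |p.2| < r}}.Nonempty := by
    by_contra h
    rw [Set.not_nonempty_iff_eq_empty] at h
    rw [hτ, injRadius, h, Real.sSup_empty] at hετ
    linarith
  have hlt : ε < sSup {r : ℝ | 0 < r ∧
      Set.InjOn (fun p : E2 × ℝ => p.1 + p.2 • n p.1) {p | p.1 ∈ M ∧ |p.2| < r}} := by
    rw [hτ, injRadius] at hετ
    exact hετ
  obtain ⟨r, hrS, hεr⟩ := exists_lt_of_lt_csSup hSne hlt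
  obtain ⟨hr0, hinj⟩ := hrS
  intro p hp q hq heq
  obtain ⟨t1, ht1, rfl⟩ := hp
  obtain ⟨t2, ht2, rfl⟩ := hq
  have hd : y - x ≠ 0 := sub_ne_zero.mpr (Ne.symm hne)
  have hN : (0:ℝ) < ‖y - x‖ ^ 2 := pow_pos (norm_pos_iff.mpr hd) 2
  have heq2 : ((inner ℝ (c.γ t1 - x) (y - x) : ℝ)) = inner ℝ (c.γ t2 - x) (y - x) := by
    have h1 : ((inner ℝ (c.γ t1 - x) (y - x) : ℝ) / ‖y - x‖ ^ 2) • (y - x)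
        = ((inner ℝ (c.γ t2 - x) (y - x) : ℝ) / ‖y - x‖ ^ 2) • (y - x) :=
      add_left_cancel heq
    have h2 := smul_left_injective ℝ hd h1
    rw [div_eq_div_iff (ne_of_gt hN) (ne_of_gt hN)] at h2
    exact mul_right_cancel₀ (ne_of_gt hN) h2
  rcases lt_trichotomy t1 t2 with h | h | h
  · exact (Stmt16.rolle_step hn hM hinj hε0 hεr hab hb hx hy hcov h ht1 ht2 heq2).elim
  · rw [h]
  · exact (Stmt16.rolle_step hn hM hinj hε0 hεr hab hb hx hy hcov h ht2 ht1 heq2.symm).elim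
end
end
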